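/- arXiv:1209.1758 — 7 statements merged into one kernel-verified Lean document; each statement's English description precedes it below -/
import Mathlib

section
/- Let L > 1 and let r : [0,L] → ℝ² be a continuously differentiable curve parametrized by arc length (i.e. ‖r'(s)‖ = 1 for all s ∈ [0,L]) with r(0) = (0,0) and r(L) = (1,0). If there is no s* ∈ [0,L] with r'(s*) = (1,0), then r is self-intersecting, i.e. the map s ↦ r(s) is not injective on [0,L]. -/
open Real Set

open Filter Topology

lemma key_no_min_chord {a b : ℝ} {X Y : ℝ → ℝ} (hab : a < b)
    (hX : ContinuousOn X (Icc a b)) (hY : ContinuousOn Y (Icc a b))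
    (hYab : Y a = Y b) (hXab : X a < X b)
    (hbelow : ∀ u ∈ Ioo a b, Y u < Y a)
    (hmin : ∀ α β, α ∈ Icc a b → β ∈ Icc a b → α < β → Y α = Y β → X α < X β →
      b - a ≤ β - α) : False := by
  -- step : for every small ε we find a shorter horizontal chord forced to go west
  have step : ∀ ε : ℝ, 0 < ε → 2 * ε ≤ b - a →
      ∃ p : ℝ × ℝ, p.1 ∈ Ioo a (a + ε) ∧ p.2 ∈ Ioo (b - ε) b ∧ X p.2 ≤ X p.1 := by
    intro ε hε hε2
    have h1 : a + ε ≤ b - ε := by linarith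
    obtain ⟨w, hw, hwmax⟩ := isCompact_Icc.exists_isMaxOn (Set.nonempty_Icc.2 h1)
      (hY.mono (Icc_subset_Icc (by linarith) (by linarith)))
    have hwIoo : w ∈ Ioo a b := ⟨by linarith [hw.1], by linarith [hw.2]⟩
    have hYw : Y w < Y a := hbelow w hwIoo
    set c : ℝ := (Y w + Y a) / 2 with hc
    have hc1 : Y w < c := by simp only [hc]; linarith
    have hc2 : c < Y a := by simp only [hc]; linarith
    have hYae : Y (a + ε) ≤ Y w := hwmax ⟨le_refl _, h1⟩
    have hYbe : Y (b - ε) ≤ Y w := hwmax ⟨h1, le_refl _⟩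
    have hcmem1 : c ∈ Ioo (Y (a + ε)) (Y a) := ⟨by linarith, hc2⟩
    have hcmem2 : c ∈ Ioo (Y (b - ε)) (Y b) := ⟨by linarith, by rw [← hYab]; exact hc2⟩
    obtain ⟨u₁, hu₁, hYu₁⟩ := intermediate_value_Ioo' (by linarith : a ≤ a + ε)
      (hY.mono (Icc_subset_Icc le_rfl (by linarith))) hcmem1
    obtain ⟨u₂, hu₂, hYu₂⟩ := intermediate_value_Ioo (by linarith : b - ε ≤ b)
      (hY.mono (Icc_subset_Icc (by linarith) le_rfl)) hcmem2
    refine ⟨(u₁, u₂), hu₁, hu₂, ?_⟩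
    by_contra h
    push_neg at h
    have h12 : u₁ < u₂ := by linarith [hu₁.2, hu₂.1]
    have := hmin u₁ u₂ ⟨le_of_lt hu₁.1, by linarith [hu₁.2]⟩
      ⟨by linarith [hu₂.1], le_of_lt hu₂.2⟩ h12 (hYu₁.trans hYu₂.symm) h
    linarith [hu₁.1, hu₂.2]
  -- now build sequences
  have hεpos : ∀ n : ℕ, 0 < (b - a) / (n + 3) := by
    intro n
    apply div_pos (by linarith)
    positivity
  have hεle : ∀ n : ℕ, 2 * ((b - a) / (n + 3)) ≤ b - a := by
    intro n
    have h3 : (0:ℝ) < (n:ℝ) + 3 := by positivity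
    rw [mul_comm, div_mul_eq_mul_div, div_le_iff₀ h3]
    nlinarith [Nat.cast_nonneg (α := ℝ) n, sub_pos.2 hab]
  have main : ∀ n : ℕ, ∃ p : ℝ × ℝ, p.1 ∈ Ioo a (a + (b - a) / (n + 3)) ∧
      p.2 ∈ Ioo (b - (b - a) / (n + 3)) b ∧ X p.2 ≤ X p.1 := fun n =>
    step _ (hεpos n) (hεle n)
  choose P h1 h2 h3 using main
  have hεlim : Tendsto (fun n : ℕ => (b - a) / (n + 3)) atTop (𝓝 0) := by
    apply Tendsto.div_atTop tendsto_const_nhds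
    exact tendsto_atTop_add_const_right _ 3 tendsto_natCast_atTop_atTop
  have hu1lim : Tendsto (fun n => (P n).1) atTop (𝓝 a) := by
    have h2' : Tendsto (fun n : ℕ => a + (b - a) / (n + 3)) atTop (𝓝 a) := by
      simpa using tendsto_const_nhds.add hεlim
    exact tendsto_of_tendsto_of_tendsto_of_le_of_le tendsto_const_nhds h2'
      (fun n => (h1 n).1.le) (fun n => (h1 n).2.le)
  have hu2lim : Tendsto (fun n => (P n).2) atTop (𝓝 b) := by
    have h2' : Tendsto (fun n : ℕ => b - (b - a) / (n + 3)) atTop (𝓝 b) := by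
      simpa using tendsto_const_nhds.sub hεlim
    exact tendsto_of_tendsto_of_tendsto_of_le_of_le h2' tendsto_const_nhds
      (fun n => (h2 n).1.le) (fun n => (h2 n).2.le)
  have hmem1 : ∀ n, (P n).1 ∈ Icc a b := by
    intro n
    refine ⟨(h1 n).1.le, ?_⟩
    have := (h1 n).2
    have := hεle n
    linarith
  have hmem2 : ∀ n, (P n).2 ∈ Icc a b := by
    intro n
    refine ⟨?_, (h2 n).2.le⟩
    have := (h2 n).1
    have := hεle n
    linarith
  have hXa : Tendsto (fun n => X ((P n).1)) atTop (𝓝 (X a)) := by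
    refine ((hX a ⟨le_refl a, hab.le⟩).tendsto).comp ?_
    exact tendsto_nhdsWithin_of_tendsto_nhds_of_eventually_within _ hu1lim
      (Eventually.of_forall hmem1)
  have hXb : Tendsto (fun n => X ((P n).2)) atTop (𝓝 (X b)) := by
    refine ((hX b ⟨hab.le, le_refl b⟩).tendsto).comp ?_
    exact tendsto_nhdsWithin_of_tendsto_nhds_of_eventually_within _ hu2lim
      (Eventually.of_forall hmem2)
  have : X b ≤ X a := le_of_tendsto_of_tendsto' hXb hXa h3
  linarith


lemma diag_no_accum {L : ℝ} {r r' : ℝ → ℝ × ℝ}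
    (hderiv : ∀ s ∈ Icc (0 : ℝ) L, HasDerivWithinAt r (r' s) (Icc (0 : ℝ) L) s)
    (hC1 : ContinuousOn r' (Icc (0 : ℝ) L))
    (hunit : ∀ s ∈ Icc (0 : ℝ) L, (r' s).1 ^ 2 + (r' s).2 ^ 2 = 1)
    (hno : ∀ s ∈ Icc (0 : ℝ) L, r' s ≠ (1, 0))
    {u : ℝ} (hu : u ∈ Icc (0 : ℝ) L) {sn tn : ℕ → ℝ}
    (hsn : ∀ n, sn n ∈ Icc (0 : ℝ) L) (htn : ∀ n, tn n ∈ Icc (0 : ℝ) L)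
    (hlt : ∀ n, sn n < tn n)
    (hy : ∀ n, (r (sn n)).2 = (r (tn n)).2)
    (hx : ∀ n, (r (sn n)).1 < (r (tn n)).1)
    (hslim : Tendsto sn atTop (𝓝 u)) (htlim : Tendsto tn atTop (𝓝 u)) : False := by
  have key : ∀ ε : ℝ, 0 < ε → |(r' u).2| ≤ ε ∧ -ε ≤ (r' u).1 := by
    intro ε hε
    have hcw : ContinuousWithinAt r' (Icc (0 : ℝ) L) u := hC1 u hu
    rw [Metric.continuousWithinAt_iff] at hcw
    obtain ⟨δ, hδ, hball⟩ := hcw ε hε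
    -- find n with both sn n, tn n within δ/2 of u
    have hev : ∀ᶠ n in atTop, |sn n - u| < δ / 2 ∧ |tn n - u| < δ / 2 := by
      have e1 := hslim (Metric.ball_mem_nhds u (by linarith : 0 < δ / 2))
      have e2 := htlim (Metric.ball_mem_nhds u (by linarith : 0 < δ / 2))
      filter_upwards [e1, e2] with n h1 h2
      exact ⟨by simpa [Real.dist_eq] using h1, by simpa [Real.dist_eq] using h2⟩
    obtain ⟨n, hn1, hn2⟩ := hev.exists
    set s := sn n
    set t := tn n
    have hst : s < t := hlt n
    have hsub : Icc s t ⊆ Icc (0 : ℝ) L := Icc_subset_Icc (hsn n).1 (htn n).2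
    have hbnd : ∀ w ∈ Icc s t, ‖r' w - r' u‖ ≤ ε := by
      intro w hw
      have hdw : dist w u < δ := by
        rw [Real.dist_eq]
        rw [abs_sub_lt_iff] at hn1 hn2 ⊢
        constructor <;> [linarith [hw.2, hn2.1]; linarith [hw.1, hn1.2]]
      have := hball (hsub hw) hdw
      rw [dist_eq_norm] at this
      exact this.le
    have hf : ∀ w ∈ Icc s t,
        HasDerivWithinAt (fun z => r z - z • (r' u)) (r' w - r' u) (Icc s t) w := by
      intro w hw
      refine ((hderiv w (hsub hw)).mono hsub).sub ?_
      simpa using (hasDerivWithinAt_id w (Icc s t)).smul_const (r' u)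
    have est := norm_image_sub_le_of_norm_deriv_le_segment' hf
      (fun w hw => hbnd w (Ico_subset_Icc_self hw)) t (right_mem_Icc.2 hst.le)
    -- components
    have hsnd : |(r t - t • r' u - (r s - s • r' u)).2| ≤ ε * (t - s) := by
      have := (norm_snd_le (r t - t • r' u - (r s - s • r' u))).trans est
      simpa [Real.norm_eq_abs] using this
    have hfst : |(r t - t • r' u - (r s - s • r' u)).1| ≤ ε * (t - s) := by
      have := (norm_fst_le (r t - t • r' u - (r s - s • r' u))).trans est
      simpa [Real.norm_eq_abs] using this
    have hsnd' : |(r t).2 - t * (r' u).2 - ((r s).2 - s * (r' u).2)| ≤ ε * (t - s) := by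
      simpa [Prod.sub_def, Prod.smul_def, smul_eq_mul] using hsnd
    have hfst' : |(r t).1 - t * (r' u).1 - ((r s).1 - s * (r' u).1)| ≤ ε * (t - s) := by
      simpa [Prod.sub_def, Prod.smul_def, smul_eq_mul] using hfst
    have hyn : (r s).2 = (r t).2 := hy n
    have hxn : (r s).1 < (r t).1 := hx n
    have hts : 0 < t - s := by linarith
    constructor
    · -- |(r' u).2| ≤ ε
      have h1 : |(t - s) * (r' u).2| ≤ ε * (t - s) := by
        have : (r t).2 - t * (r' u).2 - ((r s).2 - s * (r' u).2) = -((t - s) * (r' u).2) := by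
          rw [← hyn]; ring
        rw [this, abs_neg] at hsnd'
        exact hsnd'
      rw [abs_mul, abs_of_pos hts] at h1
      have := (mul_le_mul_iff_right₀ hts).mp (by linarith [h1] : (t - s) * |(r' u).2| ≤ (t - s) * ε)
      linarith
    · -- -ε ≤ (r' u).1
      have h2 : (r t).1 - (r s).1 - (t - s) * (r' u).1 ≤ ε * (t - s) := by
        have := (abs_le.mp hfst').2
        linarith [this]
      nlinarith [hxn]
  have h2zero : (r' u).2 = 0 := by
    by_contra h
    have hpos : 0 < |(r' u).2| := abs_pos.mpr h
    have := (key (|(r' u).2| / 2) (by linarith)).1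
    linarith
  have h1nonneg : 0 ≤ (r' u).1 := by
    by_contra h
    push_neg at h
    have := (key (-(r' u).1 / 2) (by linarith)).2
    linarith
  have h1one : (r' u).1 = 1 := by
    have hu1 := hunit u hu
    rw [h2zero] at hu1
    have : ((r' u).1 - 1) * ((r' u).1 + 1) = 0 := by nlinarith
    rcases mul_eq_zero.mp this with h | h
    · linarith
    · nlinarith
  exact hno u hu (Prod.ext h1one h2zero)

/-- Let `L > 1` and let `r : [0,L] → ℝ²` be a continuously differentiable
curve parametrized by arc length (`‖r'(s)‖ = 1`, expressed via the Euclidean norm as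
`(r' s).1 ^ 2 + (r' s).2 ^ 2 = 1`) with `r 0 = (0,0)` and `r L = (1,0)`.
If there is no `s* ∈ [0,L]` with `r' s* = (1,0)`, then `r` is self-intersecting,
i.e. `r` is not injective on `[0,L]`. -/
theorem no_horizontal_tangent_implies_self_intersecting
    (L : ℝ) (hL : 1 < L) (r r' : ℝ → ℝ × ℝ)
    (hderiv : ∀ s ∈ Icc (0 : ℝ) L, HasDerivWithinAt r (r' s) (Icc (0 : ℝ) L) s)
    (hC1 : ContinuousOn r' (Icc (0 : ℝ) L))
    (hunit : ∀ s ∈ Icc (0 : ℝ) L, (r' s).1 ^ 2 + (r' s).2 ^ 2 = 1)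
    (h0 : r 0 = (0, 0)) (hLend : r L = (1, 0))
    (hno : ∀ s ∈ Icc (0 : ℝ) L, r' s ≠ (1, 0)) :
    ¬ InjOn r (Icc (0 : ℝ) L) := by
  intro hinj
  have hL0 : (0 : ℝ) ≤ L := by linarith
  have h0mem : (0 : ℝ) ∈ Icc (0 : ℝ) L := ⟨le_refl _, hL0⟩
  have hLmem : L ∈ Icc (0 : ℝ) L := ⟨hL0, le_refl _⟩
  have hrc : ContinuousOn r (Icc (0 : ℝ) L) := fun s hs => (hderiv s hs).continuousWithinAt
  set E : Set (ℝ × ℝ) := {z | z.1 ∈ Icc (0 : ℝ) L ∧ z.2 ∈ Icc (0 : ℝ) L ∧ z.1 < z.2 ∧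
    (r z.1).2 = (r z.2).2 ∧ (r z.1).1 < (r z.2).1} with hEdef
  have hE0L : ((0 : ℝ), L) ∈ E := by
    refine ⟨h0mem, hLmem, show (0:ℝ) < L by linarith, ?_, ?_⟩ <;> simp [h0, hLend]
  have hsubE : E ⊆ Icc (0 : ℝ) L ×ˢ Icc (0 : ℝ) L := fun z hz => ⟨hz.1, hz.2.1⟩
  have hCsub : closure E ⊆ Icc (0 : ℝ) L ×ˢ Icc (0 : ℝ) L :=
    closure_minimal hsubE (isClosed_Icc.prod isClosed_Icc)
  have hCcpt : IsCompact (closure E) :=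
    (isCompact_Icc.prod isCompact_Icc).of_isClosed_subset isClosed_closure hCsub
  obtain ⟨p, hpC, hpmin⟩ := hCcpt.exists_isMinOn ⟨((0 : ℝ), L), subset_closure hE0L⟩
    ((continuous_snd.sub continuous_fst).continuousOn)
  obtain ⟨q, hqE, hqlim⟩ := mem_closure_iff_seq_limit.mp hpC
  obtain ⟨a, b⟩ := p
  have hq1 : Tendsto (fun n => (q n).1) atTop (𝓝 a) := (continuous_fst.tendsto _).comp hqlim
  have hq2 : Tendsto (fun n => (q n).2) atTop (𝓝 b) := (continuous_snd.tendsto _).comp hqlim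
  have hp1 : a ∈ Icc (0 : ℝ) L := (hCsub hpC).1
  have hp2 : b ∈ Icc (0 : ℝ) L := (hCsub hpC).2
  have hple : a ≤ b := le_of_tendsto_of_tendsto' hq1 hq2 (fun n => (hqE n).2.2.1.le)
  have hr1 : Tendsto (fun n => r ((q n).1)) atTop (𝓝 (r a)) :=
    ((hrc a hp1).tendsto).comp (tendsto_nhdsWithin_of_tendsto_nhds_of_eventually_within _ hq1
      (Eventually.of_forall fun n => (hqE n).1))
  have hr2 : Tendsto (fun n => r ((q n).2)) atTop (𝓝 (r b)) :=
    ((hrc b hp2).tendsto).comp (tendsto_nhdsWithin_of_tendsto_nhds_of_eventually_within _ hq2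
      (Eventually.of_forall fun n => (hqE n).2.1))
  have hyp : (r a).2 = (r b).2 := by
    have t1 : Tendsto (fun n => (r ((q n).1)).2) atTop (𝓝 ((r a).2)) :=
      (continuous_snd.tendsto _).comp hr1
    have t2 : Tendsto (fun n => (r ((q n).2)).2) atTop (𝓝 ((r b).2)) :=
      (continuous_snd.tendsto _).comp hr2
    have he : (fun n => (r ((q n).1)).2) = fun n => (r ((q n).2)).2 :=
      funext fun n => (hqE n).2.2.2.1
    rw [he] at t1
    exact tendsto_nhds_unique t1 t2
  have hxp : (r a).1 ≤ (r b).1 := by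
    have t1 : Tendsto (fun n => (r ((q n).1)).1) atTop (𝓝 ((r a).1)) :=
      (continuous_fst.tendsto _).comp hr1
    have t2 : Tendsto (fun n => (r ((q n).2)).1) atTop (𝓝 ((r b).1)) :=
      (continuous_fst.tendsto _).comp hr2
    exact le_of_tendsto_of_tendsto' t1 t2 (fun n => ((hqE n).2.2.2.2).le)
  rcases eq_or_lt_of_le hple with heq | hab
  · exact diag_no_accum hderiv hC1 hunit hno hp1 (fun n => (hqE n).1) (fun n => (hqE n).2.1)
      (fun n => (hqE n).2.2.1) (fun n => (hqE n).2.2.2.1) (fun n => (hqE n).2.2.2.2) hq1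
      (heq ▸ hq2)
  rcases eq_or_lt_of_le hxp with hxeq | hxlt
  · exact absurd (hinj hp1 hp2 (Prod.ext hxeq hyp)) (ne_of_lt hab)
  have hmin' : ∀ z ∈ E, b - a ≤ z.2 - z.1 := by
    intro z hz
    have := hpmin (subset_closure hz)
    simpa using this
  have claim1 : ∀ v ∈ Ioo a b, (r v).2 ≠ (r a).2 := by
    intro v hv hvy
    have hvmem : v ∈ Icc (0 : ℝ) L := ⟨le_trans hp1.1 hv.1.le, le_trans hv.2.le hp2.2⟩
    rcases lt_trichotomy ((r v).1) ((r a).1) with h | h | h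
    · rcases lt_trichotomy ((r v).1) ((r b).1) with g | g | g
      · have := hmin' (v, b) ⟨hvmem, hp2, hv.2, hvy.trans hyp, g⟩
        simp only at this
        linarith [hv.1]
      · exact absurd (hinj hvmem hp2 (Prod.ext g (hvy.trans hyp))) (ne_of_lt hv.2)
      · linarith
    · exact absurd (hinj hvmem hp1 (Prod.ext h hvy)) (ne_of_gt hv.1)
    · have := hmin' (a, v) ⟨hp1, hvmem, hv.1, hvy.symm, h⟩
      simp only at this
      linarith [hv.2]
  have hIccsub : Icc a b ⊆ Icc (0 : ℝ) L := Icc_subset_Icc hp1.1 hp2.2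
  have hrcab : ContinuousOn r (Icc a b) := hrc.mono hIccsub
  have hycont : ContinuousOn (fun s => (r s).2) (Icc a b) :=
    continuous_snd.comp_continuousOn hrcab
  have hxcont : ContinuousOn (fun s => (r s).1) (Icc a b) :=
    continuous_fst.comp_continuousOn hrcab
  have dich : (∀ v ∈ Ioo a b, (r v).2 < (r a).2) ∨ ∀ v ∈ Ioo a b, (r a).2 < (r v).2 := by
    by_contra hcon
    push_neg at hcon
    obtain ⟨⟨v₁, hv₁, hv₁'⟩, ⟨v₂, hv₂, hv₂'⟩⟩ := hcon
    have hv₁' : (r a).2 < (r v₁).2 := lt_of_le_of_ne hv₁' (fun h => claim1 v₁ hv₁ h.symm)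
    have hv₂' : (r v₂).2 < (r a).2 := lt_of_le_of_ne hv₂' (claim1 v₂ hv₂)
    rcases lt_trichotomy v₁ v₂ with h | h | h
    · obtain ⟨w, hw, hwv⟩ := intermediate_value_Ioo' h.le
        (hycont.mono (Icc_subset_Icc hv₁.1.le hv₂.2.le)) ⟨hv₂', hv₁'⟩
      exact claim1 w ⟨lt_trans hv₁.1 hw.1, lt_trans hw.2 hv₂.2⟩ hwv
    · rw [h] at hv₁'; linarith
    · obtain ⟨w, hw, hwv⟩ := intermediate_value_Ioo h.le
        (hycont.mono (Icc_subset_Icc hv₂.1.le hv₁.2.le)) ⟨hv₂', hv₁'⟩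
      exact claim1 w ⟨lt_trans hv₂.1 hw.1, lt_trans hw.2 hv₁.2⟩ hwv
  rcases dich with hbelow | habove
  · exact key_no_min_chord hab hxcont hycont hyp hxlt hbelow
      (fun α β hα hβ hαβ hYeq hXlt =>
        hmin' (α, β) ⟨hIccsub hα, hIccsub hβ, hαβ, hYeq, hXlt⟩)
  · refine key_no_min_chord (Y := fun s => -(r s).2) hab hxcont hycont.neg ?_ hxlt ?_ ?_
    · simpa using hyp
    · intro v hv
      simpa using habove v hv
    · intro α β hα hβ hαβ hYeq hXlt
      exact hmin' (α, β) ⟨hIccsub hα, hIccsub hβ, hαβ, neg_inj.mp hYeq, hXlt⟩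
end

section
/- Let f_n : ℝ → ℝ be Lipschitz continuous and 2π-periodic, let f_t : ℝ → ℝ be continuous, and suppose there exists β ∈ (0, π/2) with f_n(β) = f_n(−β) = 0. Let L > 0, x₀ > 0 and y₀ ∈ ℝ be such that the boundary slope α₀ = arctan(y₀/x₀) satisfies −β ≤ α₀ ≤ β, and suppose L > x₀/cos(β). Then every taut string configuration (α, T, x, y) on [0,L] with normal load f_n and tangential load f_t satisfying the boundary conditions x(0) = 0, y(0) = 0, x(L) = x₀, y(L) = y₀ is self-intersecting; i.e. the boundary value problem has no smooth solution free of self-intersection. -/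
open Real Set

lemma aux_inv {a b : ℝ} {f : ℝ → ℝ} (hf : ContinuousOn f (Icc a b)) (hinj : InjOn f (Icc a b)) :
    ∃ g : ℝ → ℝ, ContinuousOn g (f '' Icc a b) ∧
      ∀ z ∈ f '' Icc a b, g z ∈ Icc a b ∧ f (g z) = z := by
  classical
  haveI : CompactSpace ↥(Icc a b) := isCompact_iff_compactSpace.mp isCompact_Icc
  have hFc : Continuous ((Icc a b).restrict f) := continuousOn_iff_continuous_restrict.mp hf
  have hFi : Function.Injective ((Icc a b).restrict f) := fun u v h => Subtype.ext (hinj u.2 v.2 h)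
  have hemb : Topology.IsEmbedding ((Icc a b).restrict f) := (hFc.isClosedEmbedding hFi).isEmbedding
  let e := hemb.toHomeomorph
  refine ⟨fun z => if hz : z ∈ Set.range ((Icc a b).restrict f) then
      ((e.symm ⟨z, hz⟩ : ↥(Icc a b)) : ℝ) else a, ?_, ?_⟩
  · have hss : f '' Icc a b = Set.range ((Icc a b).restrict f) :=
      (Set.range_restrict f (Icc a b)).symm
    rw [hss, continuousOn_iff_continuous_restrict]
    have heq : (Set.range ((Icc a b).restrict f)).restrict
        (fun z => if hz : z ∈ Set.range ((Icc a b).restrict f) then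
          ((e.symm ⟨z, hz⟩ : ↥(Icc a b)) : ℝ) else a)
        = fun z => ((e.symm z : ↥(Icc a b)) : ℝ) := by
      funext z
      exact dif_pos z.2
    exact (continuous_subtype_val.comp e.symm.continuous).congr fun z => (congrFun heq z).symm
  · intro z hz
    rw [← Set.range_restrict] at hz
    simp only [dif_pos (show z ∈ Set.range ((Icc a b).restrict f) from hz)]
    refine ⟨(e.symm ⟨z, hz⟩).2, ?_⟩
    exact congrArg Subtype.val (e.apply_symm_apply ⟨z, hz⟩)

lemma aux_core {L : ℝ} (hL : 0 < L) (θ X Y : ℝ → ℝ)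
    (hθc : ContinuousOn θ (Icc 0 L)) (hθm : StrictMonoOn θ (Icc 0 L))
    (hθmem : ∀ s ∈ Icc (0:ℝ) L, θ s ∈ Ioo 0 (2*π))
    (hX : ∀ s ∈ Icc (0:ℝ) L, HasDerivWithinAt X (Real.cos (θ s)) (Icc (0:ℝ) L) s)
    (hY : ∀ s ∈ Icc (0:ℝ) L, HasDerivWithinAt Y (Real.sin (θ s)) (Icc (0:ℝ) L) s)
    (hY0 : Y 0 = 0) (hYL : Y L = 0) (hX0L : X 0 < X L) :
    ∃ s ∈ Icc (0:ℝ) L, ∃ t ∈ Icc (0:ℝ) L, s ≠ t ∧ X s = X t ∧ Y s = Y t := by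
  have hπ := Real.pi_pos
  have h0mem : (0:ℝ) ∈ Icc (0:ℝ) L := ⟨le_rfl, hL.le⟩
  have hLmem : L ∈ Icc (0:ℝ) L := ⟨hL.le, le_rfl⟩
  have hXc : ContinuousOn X (Icc 0 L) := fun u hu => (hX u hu).continuousWithinAt
  have hYc : ContinuousOn Y (Icc 0 L) := fun u hu => (hY u hu).continuousWithinAt
  have hYd : ∀ u ∈ Ioo (0:ℝ) L, HasDerivAt Y (Real.sin (θ u)) u := fun u hu =>
    (hY u ⟨hu.1.le, hu.2.le⟩).hasDerivAt (Icc_mem_nhds hu.1 hu.2)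
  have hXd : ∀ u ∈ Ioo (0:ℝ) L, HasDerivAt X (Real.cos (θ u)) u := fun u hu =>
    (hX u ⟨hu.1.le, hu.2.le⟩).hasDerivAt (Icc_mem_nhds hu.1 hu.2)
  -- θ 0 < π
  have θ0lt : θ 0 < π := by
    by_contra h
    push_neg at h
    have hanti : StrictAntiOn Y (Icc 0 L) := by
      apply strictAntiOn_of_deriv_neg (convex_Icc 0 L) hYc
      intro u hu
      rw [interior_Icc] at hu
      rw [(hYd u hu).deriv]
      have h1 : π < θ u := lt_of_le_of_lt h (hθm h0mem ⟨hu.1.le, hu.2.le⟩ hu.1)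
      have h2 : θ u < 2*π := (hθmem u ⟨hu.1.le, hu.2.le⟩).2
      have : Real.sin (θ u - 2*π) < 0 :=
        Real.sin_neg_of_neg_of_neg_pi_lt (by linarith) (by linarith)
      rwa [Real.sin_sub_two_pi] at this
    have := hanti h0mem hLmem hL
    rw [hY0, hYL] at this
    exact lt_irrefl 0 this
  -- π < θ L
  have θLgt : π < θ L := by
    by_contra h
    push_neg at h
    have hmono : StrictMonoOn Y (Icc 0 L) := by
      apply strictMonoOn_of_deriv_pos (convex_Icc 0 L) hYc
      intro u hu
      rw [interior_Icc] at hu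
      rw [(hYd u hu).deriv]
      have h1 : θ u < π := lt_of_lt_of_le (hθm ⟨hu.1.le, hu.2.le⟩ hLmem hu.2) h
      exact Real.sin_pos_of_pos_of_lt_pi (hθmem u ⟨hu.1.le, hu.2.le⟩).1 h1
    have := hmono h0mem hLmem hL
    rw [hY0, hYL] at this
    exact lt_irrefl 0 this
  -- the crossing point
  obtain ⟨sm, hsmmem, hsmeq⟩ : ∃ sm ∈ Icc (0:ℝ) L, θ sm = π :=
    intermediate_value_Icc hL.le hθc ⟨θ0lt.le, θLgt.le⟩
  have hsm0 : 0 < sm := by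
    rcases eq_or_lt_of_le hsmmem.1 with h | h
    · exfalso; rw [← h] at hsmeq; exact θ0lt.ne hsmeq
    · exact h
  have hsmL : sm < L := by
    rcases eq_or_lt_of_le hsmmem.2 with h | h
    · exfalso; rw [h] at hsmeq; exact θLgt.ne' hsmeq
    · exact h
  -- Y strictly monotone on [0,sm], strictly antitone on [sm,L]
  have Ymono : StrictMonoOn Y (Icc 0 sm) := by
    apply strictMonoOn_of_deriv_pos (convex_Icc 0 sm) (hYc.mono (Icc_subset_Icc le_rfl hsmmem.2))
    intro u hu
    rw [interior_Icc] at hu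
    have humem : u ∈ Icc (0:ℝ) L := ⟨hu.1.le, hu.2.le.trans hsmmem.2⟩
    rw [(hYd u ⟨hu.1, hu.2.trans_le hsmmem.2⟩).deriv]
    have h1 : θ u < π := hsmeq ▸ hθm humem hsmmem hu.2
    exact Real.sin_pos_of_pos_of_lt_pi (hθmem u humem).1 h1
  have Yanti : StrictAntiOn Y (Icc sm L) := by
    apply strictAntiOn_of_deriv_neg (convex_Icc sm L) (hYc.mono (Icc_subset_Icc hsmmem.1 le_rfl))
    intro u hu
    rw [interior_Icc] at hu
    have humem : u ∈ Icc (0:ℝ) L := ⟨hsmmem.1.trans hu.1.le, hu.2.le⟩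
    rw [(hYd u ⟨hsm0.trans hu.1, hu.2⟩).deriv]
    have h1 : π < θ u := hsmeq ▸ hθm hsmmem humem hu.1
    have h2 : θ u < 2*π := (hθmem u humem).2
    have : Real.sin (θ u - 2*π) < 0 :=
      Real.sin_neg_of_neg_of_neg_pi_lt (by linarith) (by linarith)
    rwa [Real.sin_sub_two_pi] at this
  set W := Y sm with hW
  have hW0 : 0 < W := by
    have := Ymono ⟨le_rfl, hsm0.le⟩ ⟨hsm0.le, le_rfl⟩ hsm0
    rwa [hY0] at this
  -- a small interval around sm where X is strictly decreasing
  have hctsθ : ContinuousAt θ sm := hθc.continuousAt (Icc_mem_nhds hsm0 hsmL)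
  have hpre : θ ⁻¹' (Ioo (π/2) (π + π/2)) ∈ nhds sm := by
    apply hctsθ.preimage_mem_nhds
    apply Ioo_mem_nhds <;> rw [hsmeq] <;> linarith
  obtain ⟨ε, hε, hball⟩ := Metric.mem_nhds_iff.mp hpre
  set δ := min (ε/2) (min sm (L - sm)) with hδ
  have hδ0 : 0 < δ := lt_min (by linarith) (lt_min hsm0 (by linarith))
  have hδsm : δ ≤ sm := (min_le_right _ _).trans (min_le_left _ _)
  have hδL : sm + δ ≤ L := by
    have := (min_le_right (ε/2) (min sm (L - sm))).trans (min_le_right sm (L - sm))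
    linarith
  have hmemball : ∀ u ∈ Icc (sm - δ) (sm + δ), θ u ∈ Ioo (π/2) (π + π/2) := by
    intro u hu
    apply hball
    rw [Metric.mem_ball, Real.dist_eq, abs_sub_lt_iff]
    constructor
    · have := hu.2; have hδε : δ ≤ ε/2 := min_le_left _ _; linarith
    · have := hu.1; have hδε : δ ≤ ε/2 := min_le_left _ _; linarith
  have Xanti : StrictAntiOn X (Icc (sm - δ) (sm + δ)) := by
    apply strictAntiOn_of_deriv_neg (convex_Icc _ _)
      (hXc.mono (Icc_subset_Icc (by linarith) hδL))
    intro u hu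
    rw [interior_Icc] at hu
    have humem : u ∈ Ioo (0:ℝ) L := ⟨by linarith [hu.1], by linarith [hu.2]⟩
    rw [(hXd u humem).deriv]
    have h1 := hmemball u ⟨hu.1.le, hu.2.le⟩
    exact Real.cos_neg_of_pi_div_two_lt_of_lt h1.1 h1.2
  -- the level h₀ and the first-branch point s₁
  set h₀ := max (Y (sm - δ)) (Y (sm + δ)) with hh₀
  have hYsubδ : Y (sm - δ) < W := Ymono ⟨by linarith, by linarith⟩ ⟨hsm0.le, le_rfl⟩ (by linarith)
  have hYaddδ : Y (sm + δ) < W := Yanti ⟨le_rfl, hsmL.le⟩ ⟨by linarith, hδL⟩ (by linarith)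
  have hh₀W : h₀ < W := max_lt hYsubδ hYaddδ
  have hh₀0 : 0 ≤ h₀ := by
    have h1 : Y L ≤ Y (sm + δ) := Yanti.antitoneOn ⟨by linarith, hδL⟩ ⟨hsmmem.2, le_rfl⟩ hδL
    rw [hYL] at h1
    exact h1.trans (le_max_right _ _)
  obtain ⟨s₁, hs₁mem, hs₁eq⟩ : ∃ s₁ ∈ Icc (sm - δ) sm, Y s₁ = h₀ := by
    apply intermediate_value_Icc (by linarith : sm - δ ≤ sm)
      (hYc.mono (Icc_subset_Icc (by linarith) hsmmem.2))
    exact ⟨le_max_left _ _, hh₀W.le⟩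
  have hs₁sm : s₁ < sm := by
    rcases eq_or_lt_of_le hs₁mem.2 with h | h
    · exfalso; rw [h] at hs₁eq; rw [← hW] at hs₁eq; exact hh₀W.ne' hs₁eq
    · exact h
  -- inverse of Y on [sm, L]
  obtain ⟨g, hgc, hg⟩ := aux_inv (hYc.mono (Icc_subset_Icc hsmmem.1 le_rfl)) Yanti.injOn
  have himg : Icc (0:ℝ) W ⊆ Y '' Icc sm L := by
    have := intermediate_value_Icc' hsmL.le (hYc.mono (Icc_subset_Icc hsmmem.1 le_rfl))
    rw [hYL, ← hW] at this
    exact this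
  have hgmem : ∀ z ∈ Icc (0:ℝ) W, g z ∈ Icc sm L := fun z hz => (hg z (himg hz)).1
  have hgval : ∀ z ∈ Icc (0:ℝ) W, Y (g z) = z := fun z hz => (hg z (himg hz)).2
  have hg0 : g 0 = L := by
    have h0W : (0:ℝ) ∈ Icc (0:ℝ) W := ⟨le_rfl, hW0.le⟩
    apply Yanti.injOn (hgmem 0 h0W) ⟨hsmmem.2, le_rfl⟩
    rw [hgval 0 h0W, hYL]
  -- Y maps [0, s₁] into [0, W]
  have hmapsY : ∀ s ∈ Icc (0:ℝ) s₁, Y s ∈ Icc (0:ℝ) W := by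
    intro s hs
    have hsmem' : s ∈ Icc (0:ℝ) sm := ⟨hs.1, hs.2.trans hs₁sm.le⟩
    constructor
    · have := Ymono.monotoneOn ⟨le_rfl, hsm0.le⟩ hsmem' hs.1
      rwa [hY0] at this
    · exact Ymono.monotoneOn hsmem' ⟨hsm0.le, le_rfl⟩ hsmem'.2
  -- the comparison function H
  set H : ℝ → ℝ := fun s => X (g (Y s)) - X s with hH
  have hs₁0 : (0:ℝ) ≤ s₁ := by linarith [hs₁mem.1, hδsm]
  have hIcc₁ : Icc (0:ℝ) s₁ ⊆ Icc (0:ℝ) L := Icc_subset_Icc le_rfl (by linarith)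
  have hHc : ContinuousOn H (Icc (0:ℝ) s₁) := by
    apply ContinuousOn.sub _ (hXc.mono hIcc₁)
    apply ContinuousOn.comp (hXc)
    · apply ContinuousOn.comp (hgc.mono _) (hYc.mono hIcc₁) hmapsY
      exact himg
    · intro s hs
      exact Icc_subset_Icc hsmmem.1 le_rfl (hgmem _ (hmapsY s hs))
  have hH0 : 0 < H 0 := by
    have : H 0 = X L - X 0 := by
      rw [hH]
      simp only [hY0, hg0]
    rw [this]; linarith
  have hHs₁ : H s₁ < 0 := by
    set s₂ := g h₀ with hs₂
    have hh₀mem : h₀ ∈ Icc (0:ℝ) W := ⟨hh₀0, hh₀W.le⟩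
    have hs₂mem : s₂ ∈ Icc sm L := hgmem h₀ hh₀mem
    have hs₂val : Y s₂ = h₀ := hgval h₀ hh₀mem
    have hs₂sm : sm < s₂ := by
      rcases eq_or_lt_of_le hs₂mem.1 with h | h
      · exact absurd (by rw [hW, h, hs₂val] : W = h₀) hh₀W.ne'
      · exact h
    have hs₂le : s₂ ≤ sm + δ := by
      by_contra hcon
      push_neg at hcon
      have hlt := Yanti ⟨by linarith, hδL⟩ hs₂mem hcon
      rw [hs₂val] at hlt
      exact absurd hlt (not_lt.mpr (le_max_right _ _))
    have hXlt : X s₂ < X s₁ :=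
      Xanti ⟨hs₁mem.1, by linarith [hs₁mem.2]⟩ ⟨by linarith, hs₂le⟩ (by linarith)
    have hHval : H s₁ = X s₂ - X s₁ := by simp only [hH, hs₁eq, hs₂]
    rw [hHval]; linarith
  obtain ⟨sf, hsfmem, hsfeq⟩ : ∃ sf ∈ Icc (0:ℝ) s₁, H sf = 0 := by
    apply intermediate_value_Icc' hs₁0 hHc
    exact ⟨hHs₁.le, hH0.le⟩
  set tf := g (Y sf) with htf
  have hYsf : Y sf ∈ Icc (0:ℝ) W := hmapsY sf hsfmem
  have htfmem : tf ∈ Icc sm L := hgmem _ hYsf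
  refine ⟨sf, hIcc₁ hsfmem, tf, ⟨hsmmem.1.trans htfmem.1, htfmem.2⟩, ?_, ?_, ?_⟩
  · exact ne_of_lt (by linarith [hsfmem.2, htfmem.1])
  · simp only [hH] at hsfeq
    linarith [hsfeq]
  · exact (hgval _ hYsf).symm

lemma aux_ode_const {K : NNReal} {fn : ℝ → ℝ} (hfn : LipschitzWith K fn)
    {L : ℝ} {α α' T : ℝ → ℝ} {Tm : ℝ} (hTm : 0 < Tm)
    (hTge : ∀ s ∈ Icc (0:ℝ) L, Tm ≤ T s)
    (hα : ∀ s ∈ Icc (0:ℝ) L, HasDerivWithinAt α (α' s) (Icc (0:ℝ) L) s)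
    (hode : ∀ s ∈ Icc (0:ℝ) L, T s * α' s = fn (α s))
    {s₀ : ℝ} (hs₀ : s₀ ∈ Icc (0:ℝ) L) (hval : fn (α s₀) = 0) :
    ∀ s ∈ Icc (0:ℝ) L, α s = α s₀ := by
  have h0L : (0:ℝ) ≤ L := hs₀.1.trans hs₀.2
  have hαc : ContinuousOn α (Icc 0 L) := fun u hu => (hα u hu).continuousWithinAt
  set proj : ℝ → ℝ := fun t => max 0 (min t L) with hproj
  have hprojmem : ∀ t, proj t ∈ Icc (0:ℝ) L := fun t =>
    ⟨le_max_left _ _, max_le h0L (min_le_right _ _)⟩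
  have hprojeq : ∀ t ∈ Icc (0:ℝ) L, proj t = t := by
    intro t ht
    simp only [hproj]
    rw [min_eq_left ht.2, max_eq_right ht.1]
  set v : ℝ → ℝ → ℝ := fun t u => fn u / T (proj t) with hv
  have hTpos : ∀ t, 0 < T (proj t) := fun t => hTm.trans_le (hTge _ (hprojmem t))
  set Kv : NNReal := K * (Real.toNNReal Tm)⁻¹ with hKv
  have hKvco : (Kv : ℝ) = (K : ℝ) * Tm⁻¹ := by
    rw [hKv]
    push_cast
    rw [Real.coe_toNNReal _ hTm.le]
  have hlip : ∀ t, LipschitzOnWith Kv (v t) univ := by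
    intro t
    apply LipschitzWith.lipschitzOnWith
    apply LipschitzWith.of_dist_le_mul
    intro u w
    have hc := hTpos t
    rw [Real.dist_eq, Real.dist_eq]
    simp only [hv]
    rw [div_sub_div_same, abs_div, abs_of_pos hc]
    have h1 : |fn u - fn w| ≤ (K : ℝ) * |u - w| := by
      have := hfn.dist_le_mul u w
      rwa [Real.dist_eq, Real.dist_eq] at this
    have h2 : |fn u - fn w| / T (proj t) ≤ |fn u - fn w| / Tm := by
      gcongr
      exact hTge _ (hprojmem t)
    have h3 : |fn u - fn w| / Tm ≤ ((K : ℝ) * |u - w|) / Tm := by gcongr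
    rw [hKvco]
    calc |fn u - fn w| / T (proj t) ≤ ((K : ℝ) * |u - w|) / Tm := h2.trans h3
      _ = (K : ℝ) * Tm⁻¹ * |u - w| := by ring
  have hder : ∀ t ∈ Icc (0:ℝ) L, α' t = v t (α t) := by
    intro t ht
    have hT : T t ≠ 0 := (hTm.trans_le (hTge t ht)).ne'
    simp only [hv]
    rw [hprojeq t ht, eq_div_iff hT, mul_comm, hode t ht]
  have hzero : ∀ t : ℝ, v t (α s₀) = 0 := by
    intro t
    simp only [hv, hval, zero_div]
  -- forward uniqueness on [s₀, L]
  have hfwd : ∀ t ∈ Icc s₀ L, α t = α s₀ := by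
    have := ODE_solution_unique_of_mem_Icc_right (v := v) (s := fun _ => univ) (fun t _ => hlip t)
      (f := α) (g := fun _ => α s₀) (a := s₀) (b := L)
      (hαc.mono (Icc_subset_Icc hs₀.1 le_rfl)) ?_ (fun _ _ => trivial)
      continuousOn_const ?_ (fun _ _ => trivial) rfl
    · exact fun t ht => this ht
    · intro t ht
      have tmem : t ∈ Icc (0:ℝ) L := ⟨hs₀.1.trans ht.1, ht.2.le⟩
      have h1 : HasDerivWithinAt α (α' t) (Ici t) t :=
        (hα t tmem).mono_of_mem_nhdsWithin (Icc_mem_nhdsGE_of_mem ⟨tmem.1, ht.2⟩)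
      rwa [hder t tmem] at h1
    · intro t ht
      rw [hzero t]
      exact hasDerivWithinAt_const _ _ _
  -- backward uniqueness on [0, s₀]
  have hbwd : ∀ t ∈ Icc (0:ℝ) s₀, α t = α s₀ := by
    have := ODE_solution_unique_of_mem_Icc_left (v := v) (s := fun _ => univ) (fun t _ => hlip t)
      (f := α) (g := fun _ => α s₀) (a := 0) (b := s₀)
      (hαc.mono (Icc_subset_Icc le_rfl hs₀.2)) ?_ (fun _ _ => trivial)
      continuousOn_const ?_ (fun _ _ => trivial) rfl
    · exact fun t ht => this ht
    · intro t ht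
      have tmem : t ∈ Icc (0:ℝ) L := ⟨ht.1.le, ht.2.trans hs₀.2⟩
      have h1 : HasDerivWithinAt α (α' t) (Iic t) t :=
        (hα t tmem).mono_of_mem_nhdsWithin (Icc_mem_nhdsLE_of_mem ⟨ht.1, tmem.2⟩)
      rwa [hder t tmem] at h1
    · intro t ht
      rw [hzero t]
      exact hasDerivWithinAt_const _ _ _
  intro s hs
  rcases le_total s s₀ with h | h
  · exact hbwd s ⟨hs.1, h⟩
  · exact hfwd s ⟨h, hs.2⟩

/-- Theorem 1 of the paper: let `f_n` be Lipschitz and `2π`-periodic,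
`f_t` continuous, and suppose `f_n β = f_n (-β) = 0` for some `β ∈ (0, π/2)`
(relevant roots).  Let `L > 0`, `x₀ > 0`, `y₀ ∈ ℝ` with boundary slope
`α₀ = arctan (y₀/x₀) ∈ [-β, β]` and `L > x₀ / cos β`.  Then every taut string
configuration `(α, T, x, y)` on `[0,L]` with normal load `f_n` and tangential load
`f_t` satisfying the boundary conditions is self-intersecting: the BVP has no smooth
solution free of self-intersection. -/
theorem no_smooth_solution_with_relevant_roots
    (fn ft : ℝ → ℝ) (K : NNReal) (hfn : LipschitzWith K fn)
    (hper : Function.Periodic fn (2 * π)) (hft : Continuous ft)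
    (β : ℝ) (hβ : β ∈ Ioo 0 (π / 2)) (hroot₁ : fn β = 0) (hroot₂ : fn (-β) = 0)
    (L x₀ y₀ : ℝ) (hL : 0 < L) (hx₀ : 0 < x₀)
    (hα₀ : Real.arctan (y₀ / x₀) ∈ Icc (-β) β)
    (hlong : L > x₀ / Real.cos β)
    (α α' T x y : ℝ → ℝ)
    (hα : ∀ s ∈ Icc (0 : ℝ) L, HasDerivWithinAt α (α' s) (Icc (0 : ℝ) L) s)
    (hα'c : ContinuousOn α' (Icc (0 : ℝ) L))
    (hT : ∀ s ∈ Icc (0 : ℝ) L, HasDerivWithinAt T (ft (α s)) (Icc (0 : ℝ) L) s)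
    (hode : ∀ s ∈ Icc (0 : ℝ) L, T s * α' s = fn (α s))
    (hx : ∀ s ∈ Icc (0 : ℝ) L, HasDerivWithinAt x (Real.cos (α s)) (Icc (0 : ℝ) L) s)
    (hy : ∀ s ∈ Icc (0 : ℝ) L, HasDerivWithinAt y (Real.sin (α s)) (Icc (0 : ℝ) L) s)
    (htaut : ∀ s ∈ Icc (0 : ℝ) L, 0 < T s)
    (hx0 : x 0 = 0) (hy0 : y 0 = 0) (hxL : x L = x₀) (hyL : y L = y₀) :
    ¬ InjOn (fun s => (x s, y s)) (Icc (0 : ℝ) L) := by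
  intro hinj
  obtain ⟨hβ0, hβπ⟩ := hβ
  have hπ := Real.pi_pos
  have h2π : (0:ℝ) < 2*π := by linarith
  have hcosβ : 0 < Real.cos β := Real.cos_pos_of_mem_Ioo ⟨by linarith, hβπ⟩
  have hlong' : x₀ < L * Real.cos β := by
    rw [gt_iff_lt, div_lt_iff₀ hcosβ] at hlong
    linarith
  have h0mem : (0:ℝ) ∈ Icc (0:ℝ) L := ⟨le_rfl, hL.le⟩
  have hLmem : L ∈ Icc (0:ℝ) L := ⟨hL.le, le_rfl⟩
  have hαc : ContinuousOn α (Icc 0 L) := fun u hu => (hα u hu).continuousWithinAt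
  have hTc : ContinuousOn T (Icc 0 L) := fun u hu => (hT u hu).continuousWithinAt
  have hxc : ContinuousOn x (Icc 0 L) := fun u hu => (hx u hu).continuousWithinAt
  have hyc : ContinuousOn y (Icc 0 L) := fun u hu => (hy u hu).continuousWithinAt
  obtain ⟨sT, hsTmem, hsTmin⟩ := isCompact_Icc.exists_isMinOn ⟨0, h0mem⟩ hTc
  have hTm : 0 < T sT := htaut sT hsTmem
  have hTge : ∀ s ∈ Icc (0:ℝ) L, T sT ≤ T s := fun s hs => hsTmin hs
  set α₀ := Real.arctan (y₀ / x₀) with hα₀def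
  have hcosα₀ : 0 < Real.cos α₀ := Real.cos_arctan_pos _
  have htanα₀ : Real.tan α₀ = y₀ / x₀ := Real.tan_arctan _
  have hy₀eq : y₀ = x₀ * Real.tan α₀ := by rw [htanα₀]; field_simp
  have hpy : Real.cos α₀ ^ 2 + Real.sin α₀ ^ 2 = 1 := by
    rw [add_comm]; exact Real.sin_sq_add_cos_sq α₀
  -- Step 1: `fn (α s) ≠ 0` everywhere
  have hne : ∀ s ∈ Icc (0:ℝ) L, fn (α s) ≠ 0 := by
    intro s₀ hs₀ hval
    have hconst := aux_ode_const hfn hTm hTge hα hode hs₀ hval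
    set c := α s₀ with hc
    have hxLc : x L = L * Real.cos c := by
      have hder : ∀ t ∈ Ico (0:ℝ) L,
          HasDerivWithinAt (fun s => x s - s * Real.cos c) 0 (Ici t) t := by
        intro t ht
        have tmem : t ∈ Icc (0:ℝ) L := ⟨ht.1, ht.2.le⟩
        have h1 : HasDerivWithinAt x (Real.cos (α t)) (Ici t) t :=
          (hx t tmem).mono_of_mem_nhdsWithin (Icc_mem_nhdsGE_of_mem ⟨ht.1, ht.2⟩)
        have h2 : HasDerivWithinAt (fun s : ℝ => s * Real.cos c) (Real.cos c) (Ici t) t := by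
          simpa using (hasDerivWithinAt_id t (Ici t)).mul_const (Real.cos c)
        have h3 := h1.sub h2
        rw [hconst t tmem] at h3
        simpa [Pi.sub_def] using h3
      have h4 := constant_of_has_deriv_right_zero
        (hxc.sub (continuousOn_id.mul continuousOn_const)) hder L hLmem
      simp only [hx0, id_eq, zero_mul, sub_zero, Pi.sub_apply, Pi.mul_apply] at h4
      linarith [h4]
    have hyLc : y L = L * Real.sin c := by
      have hder : ∀ t ∈ Ico (0:ℝ) L,
          HasDerivWithinAt (fun s => y s - s * Real.sin c) 0 (Ici t) t := by
        intro t ht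
        have tmem : t ∈ Icc (0:ℝ) L := ⟨ht.1, ht.2.le⟩
        have h1 : HasDerivWithinAt y (Real.sin (α t)) (Ici t) t :=
          (hy t tmem).mono_of_mem_nhdsWithin (Icc_mem_nhdsGE_of_mem ⟨ht.1, ht.2⟩)
        have h2 : HasDerivWithinAt (fun s : ℝ => s * Real.sin c) (Real.sin c) (Ici t) t := by
          simpa using (hasDerivWithinAt_id t (Ici t)).mul_const (Real.sin c)
        have h3 := h1.sub h2
        rw [hconst t tmem] at h3
        simpa [Pi.sub_def] using h3
      have h4 := constant_of_has_deriv_right_zero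
        (hyc.sub (continuousOn_id.mul continuousOn_const)) hder L hLmem
      simp only [hy0, id_eq, zero_mul, sub_zero, Pi.sub_apply, Pi.mul_apply] at h4
      linarith [h4]
    have hxL' : x₀ = L * Real.cos c := by rw [← hxL]; exact hxLc
    have hyL' : y₀ = L * Real.sin c := by rw [← hyL]; exact hyLc
    have hcosc : 0 < Real.cos c := by
      rcases le_or_gt (Real.cos c) 0 with h | h
      · nlinarith
      · exact h
    set mc : ℤ := ⌊(c + π) / (2*π)⌋ with hmc
    set c' : ℝ := c - mc * (2*π) with hc'
    have hmle : (mc:ℝ) * (2*π) ≤ c + π := by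
      have := Int.floor_le ((c + π) / (2*π))
      rwa [le_div_iff₀ h2π] at this
    have hmgt : c + π < ((mc:ℝ) + 1) * (2*π) := by
      have := Int.lt_floor_add_one ((c + π) / (2*π))
      rw [div_lt_iff₀ h2π] at this
      push_cast at this ⊢
      linarith
    have hc'lo : -π ≤ c' := by rw [hc']; linarith
    have hc'hi : c' < π := by rw [hc']; linarith
    have hcosc' : Real.cos c' = Real.cos c := Real.cos_sub_int_mul_two_pi c mc
    have hc'2 : -(π/2) < c' ∧ c' < π/2 := by
      constructor
      · by_contra h
        push_neg at h
        have h5 : Real.cos c' ≤ 0 := by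
          rw [← Real.cos_neg]
          exact Real.cos_nonpos_of_pi_div_two_le_of_le (by linarith) (by linarith)
        rw [hcosc'] at h5
        linarith
      · by_contra h
        push_neg at h
        have h5 : Real.cos c' ≤ 0 :=
          Real.cos_nonpos_of_pi_div_two_le_of_le h (by linarith)
        rw [hcosc'] at h5
        linarith
    have htanc : Real.tan c' = y₀ / x₀ := by
      have h5 : Real.tan c = y₀ / x₀ := by
        rw [Real.tan_eq_sin_div_cos, hxL', hyL', mul_comm L, mul_comm L,
          mul_div_mul_right _ _ hL.ne']
      rw [← h5]
      have h6 := (Real.tan_periodic.int_mul (2*mc)) c'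
      have h7 : c' + ((2*mc : ℤ) : ℝ) * π = c := by
        rw [hc']
        push_cast
        ring
      rw [h7] at h6
      exact h6.symm
    have hα₀c' : α₀ = c' := by
      rw [hα₀def, ← htanc, Real.arctan_tan hc'2.1 hc'2.2]
    have hcosge : Real.cos β ≤ Real.cos c := by
      have h8 : |α₀| ≤ β := abs_le.mpr ⟨hα₀.1, hα₀.2⟩
      have h9 : Real.cos β ≤ Real.cos |α₀| :=
        Real.cos_le_cos_of_nonneg_of_le_pi (abs_nonneg _) (by linarith) h8
      rw [Real.cos_abs, hα₀c', hcosc'] at h9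
      exact h9
    have h10 := mul_le_mul_of_nonneg_left hcosge hL.le
    linarith
  -- Step 2: α' has constant sign
  have hα'ne : ∀ s ∈ Icc (0:ℝ) L, α' s ≠ 0 := by
    intro s hs h0
    exact hne s hs (by rw [← hode s hs, h0, mul_zero])
  have hsign : (∀ s ∈ Icc (0:ℝ) L, 0 < α' s) ∨ (∀ s ∈ Icc (0:ℝ) L, α' s < 0) := by
    rcases (hα'ne 0 h0mem).lt_or_gt with hneg | hpos
    · right
      intro s hs
      rcases (hα'ne s hs).lt_or_gt with h | h
      · exact h
      · exfalso
        obtain ⟨u, hu, hu0⟩ := intermediate_value_uIcc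
          (hα'c.mono (by rw [uIcc_of_le hs.1]; exact Icc_subset_Icc le_rfl hs.2))
          (Set.mem_uIcc.mpr (Or.inl ⟨hneg.le, h.le⟩))
        rw [uIcc_of_le hs.1] at hu
        exact hα'ne u ⟨hu.1, hu.2.trans hs.2⟩ hu0
    · left
      intro s hs
      rcases (hα'ne s hs).lt_or_gt with h | h
      · exfalso
        obtain ⟨u, hu, hu0⟩ := intermediate_value_uIcc
          (hα'c.mono (by rw [uIcc_of_le hs.1]; exact Icc_subset_Icc le_rfl hs.2))
          (Set.mem_uIcc.mpr (Or.inr ⟨h.le, hpos.le⟩))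
        rw [uIcc_of_le hs.1] at hu
        exact hα'ne u ⟨hu.1, hu.2.trans hs.2⟩ hu0
      · exact h
  -- Step 3: trapping α between consecutive roots
  set m : ℤ := ⌊(α 0 + β) / (2*π)⌋ with hm
  have hm1 : (m:ℝ) * (2*π) ≤ α 0 + β := by
    have := Int.floor_le ((α 0 + β) / (2*π))
    rwa [le_div_iff₀ h2π] at this
  have hm2 : α 0 + β < ((m:ℝ) + 1) * (2*π) := by
    have := Int.lt_floor_add_one ((α 0 + β) / (2*π))
    rw [div_lt_iff₀ h2π] at this
    push_cast at this ⊢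
    linarith
  have ha0lo : -β ≤ α 0 - m*(2*π) := by linarith
  have ha0hi : α 0 - m*(2*π) < 2*π - β := by linarith
  have hperiod : ∀ w : ℝ, ∀ s ∈ Icc (0:ℝ) L, α s - m*(2*π) = w → fn (α s) = fn w := by
    intro w s hs heq
    have h1 := hper.sub_int_mul_eq (x := α s) m
    rw [heq] at h1
    exact h1.symm
  have stayup : ∀ w : ℝ, fn w = 0 → α 0 - m*(2*π) < w →
      ∀ s ∈ Icc (0:ℝ) L, α s - m*(2*π) < w := by
    intro w hw haw s hs
    by_contra hcon
    push_neg at hcon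
    obtain ⟨u, hu, huv⟩ := intermediate_value_uIcc
      (hαc.mono (by rw [uIcc_of_le hs.1]; exact Icc_subset_Icc le_rfl hs.2))
      (Set.mem_uIcc.mpr (Or.inl ⟨by linarith, by linarith⟩) :
        w + m*(2*π) ∈ uIcc (α 0) (α s))
    rw [uIcc_of_le hs.1] at hu
    have humem : u ∈ Icc (0:ℝ) L := ⟨hu.1, hu.2.trans hs.2⟩
    exact hne u humem ((hperiod w u humem (by linarith)).trans hw)
  have staydown : ∀ w : ℝ, fn w = 0 → w < α 0 - m*(2*π) →
      ∀ s ∈ Icc (0:ℝ) L, w < α s - m*(2*π) := by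
    intro w hw haw s hs
    by_contra hcon
    push_neg at hcon
    obtain ⟨u, hu, huv⟩ := intermediate_value_uIcc
      (hαc.mono (by rw [uIcc_of_le hs.1]; exact Icc_subset_Icc le_rfl hs.2))
      (Set.mem_uIcc.mpr (Or.inr ⟨by linarith, by linarith⟩) :
        w + m*(2*π) ∈ uIcc (α 0) (α s))
    rw [uIcc_of_le hs.1] at hu
    have humem : u ∈ Icc (0:ℝ) L := ⟨hu.1, hu.2.trans hs.2⟩
    exact hne u humem ((hperiod w u humem (by linarith)).trans hw)
  have hane : ∀ w : ℝ, fn w = 0 → α 0 - m*(2*π) ≠ w := by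
    intro w hw heq
    exact hne 0 h0mem ((hperiod w 0 h0mem heq).trans hw)
  have hroot₃ : fn (2*π - β) = 0 := by
    have h1 := hper (-β)
    rw [show -β + 2*π = 2*π - β from by ring] at h1
    rw [h1]
    exact hroot₂
  rcases lt_or_ge (α 0 - m*(2*π)) β with hcase | hcase
  · -- Case I : α trapped in (-β + 2πm, β + 2πm); the string is too long
    have hlo : -β < α 0 - m*(2*π) := lt_of_le_of_ne ha0lo (hane (-β) hroot₂).symm
    have hup : ∀ s ∈ Icc (0:ℝ) L, α s - m*(2*π) < β := stayup β hroot₁ hcase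
    have hdown : ∀ s ∈ Icc (0:ℝ) L, -β < α s - m*(2*π) := staydown (-β) hroot₂ hlo
    have hcos : ∀ u ∈ Icc (0:ℝ) L, Real.cos β < Real.cos (α u) := by
      intro u hu
      have h1 : |α u - m*(2*π)| < β := abs_lt.mpr ⟨by linarith [hdown u hu], hup u hu⟩
      have h2 : Real.cos β < Real.cos |α u - m*(2*π)| :=
        Real.cos_lt_cos_of_nonneg_of_le_pi (abs_nonneg _) (by linarith) h1
      rwa [Real.cos_abs, Real.cos_sub_int_mul_two_pi] at h2
    have hmono : StrictMonoOn (fun s => x s - s * Real.cos β) (Icc 0 L) := by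
      apply strictMonoOn_of_deriv_pos (convex_Icc 0 L)
        (hxc.sub (continuousOn_id.mul continuousOn_const))
      intro u hu
      rw [interior_Icc] at hu
      have humem : u ∈ Icc (0:ℝ) L := ⟨hu.1.le, hu.2.le⟩
      have hd : HasDerivAt (fun s => x s - s * Real.cos β)
          (Real.cos (α u) - Real.cos β) u := by
        have h1 := (hx u humem).hasDerivAt (Icc_mem_nhds hu.1 hu.2)
        simpa [Pi.sub_def] using h1.sub ((hasDerivAt_id u).mul_const (Real.cos β))
      show 0 < deriv (fun s => x s - s * Real.cos β) u
      rw [hd.deriv]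
      linarith [hcos u humem]
    have h9 : x 0 - 0 * Real.cos β < x L - L * Real.cos β := hmono h0mem hLmem hL
    rw [hx0, hxL, zero_mul, sub_zero] at h9
    linarith
  · -- Case II : α trapped in (β + 2πm, 2π - β + 2πm); self-intersection
    have hloβ : β < α 0 - m*(2*π) := lt_of_le_of_ne hcase (hane β hroot₁).symm
    have hup2 : ∀ s ∈ Icc (0:ℝ) L, α s - m*(2*π) < 2*π - β :=
      stayup (2*π - β) hroot₃ ha0hi
    have hdown2 : ∀ s ∈ Icc (0:ℝ) L, β < α s - m*(2*π) := staydown β hroot₁ hloβ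
    have hXL : Real.cos α₀ * x L + Real.sin α₀ * y L = x₀ / Real.cos α₀ := by
      rw [hxL, hyL, hy₀eq, Real.tan_eq_sin_div_cos]
      field_simp
      linear_combination hpy
    have hXLpos : 0 < x₀ / Real.cos α₀ := div_pos hx₀ hcosα₀
    have hX0L : Real.cos α₀ * x 0 + Real.sin α₀ * y 0 <
        Real.cos α₀ * x L + Real.sin α₀ * y L := by
      rw [hx0, hy0, hXL, mul_zero, mul_zero, add_zero]
      exact hXLpos
    have hYLv : Real.cos α₀ * y L - Real.sin α₀ * x L = 0 := by
      rw [hxL, hyL, hy₀eq, Real.tan_eq_sin_div_cos]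
      field_simp
      ring
    rcases hsign with hpos | hneg
    · -- α strictly increasing
      have hmonoα : StrictMonoOn α (Icc 0 L) := by
        apply strictMonoOn_of_deriv_pos (convex_Icc 0 L) hαc
        intro u hu
        rw [interior_Icc] at hu
        rw [((hα u ⟨hu.1.le, hu.2.le⟩).hasDerivAt (Icc_mem_nhds hu.1 hu.2)).deriv]
        exact hpos u ⟨hu.1.le, hu.2.le⟩
      obtain ⟨s, hsmem, t, htmem, hst, hXeq, hYeq⟩ := aux_core hL
        (fun s => α s - m*(2*π) - α₀)
        (fun s => Real.cos α₀ * x s + Real.sin α₀ * y s)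
        (fun s => Real.cos α₀ * y s - Real.sin α₀ * x s)
        ((hαc.sub continuousOn_const).sub continuousOn_const)
        (fun u hu v hv huv => by
          have := hmonoα hu hv huv
          simp only
          linarith)
        (fun s hs => ⟨show (0:ℝ) < α s - (m:ℝ)*(2*π) - α₀ by linarith [hdown2 s hs, hα₀.2],
          show α s - (m:ℝ)*(2*π) - α₀ < 2*π by linarith [hup2 s hs, hα₀.1]⟩)
        (fun s hs => by
          have h1 := ((hx s hs).const_mul (Real.cos α₀)).add
            ((hy s hs).const_mul (Real.sin α₀))
          have h2 : Real.cos (α s - m*(2*π) - α₀) =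
              Real.cos α₀ * Real.cos (α s) + Real.sin α₀ * Real.sin (α s) := by
            rw [show α s - m*(2*π) - α₀ = (α s - α₀) - m*(2*π) from by ring,
              Real.cos_sub_int_mul_two_pi, Real.cos_sub]
            ring
          rw [h2]
          exact h1)
        (fun s hs => by
          have h1 := ((hy s hs).const_mul (Real.cos α₀)).sub
            ((hx s hs).const_mul (Real.sin α₀))
          have h2 : Real.sin (α s - m*(2*π) - α₀) =
              Real.cos α₀ * Real.sin (α s) - Real.sin α₀ * Real.cos (α s) := by
            rw [show α s - m*(2*π) - α₀ = (α s - α₀) - m*(2*π) from by ring,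
              Real.sin_sub_int_mul_two_pi, Real.sin_sub]
            ring
          rw [h2]
          exact h1)
        (show Real.cos α₀ * y 0 - Real.sin α₀ * x 0 = 0 by
          rw [hx0, hy0, mul_zero, mul_zero, sub_zero])
        hYLv hX0L
      have hXeq' : Real.cos α₀ * x s + Real.sin α₀ * y s =
          Real.cos α₀ * x t + Real.sin α₀ * y t := hXeq
      have hYeq' : Real.cos α₀ * y s - Real.sin α₀ * x s =
          Real.cos α₀ * y t - Real.sin α₀ * x t := hYeq
      have hxeq : x s = x t := by
        have e1 : ∀ u : ℝ, Real.cos α₀ * (Real.cos α₀ * x u + Real.sin α₀ * y u) -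
            Real.sin α₀ * (Real.cos α₀ * y u - Real.sin α₀ * x u) = x u := fun u => by
          linear_combination (x u) * hpy
        rw [← e1 s, ← e1 t, hXeq', hYeq']
      have hyeq : y s = y t := by
        have e2 : ∀ u : ℝ, Real.sin α₀ * (Real.cos α₀ * x u + Real.sin α₀ * y u) +
            Real.cos α₀ * (Real.cos α₀ * y u - Real.sin α₀ * x u) = y u := fun u => by
          linear_combination (y u) * hpy
        rw [← e2 s, ← e2 t, hXeq', hYeq']
      exact hst (hinj hsmem htmem (show (x s, y s) = (x t, y t) from by rw [hxeq, hyeq]))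
    · -- α strictly decreasing
      have hantiα : StrictAntiOn α (Icc 0 L) := by
        apply strictAntiOn_of_deriv_neg (convex_Icc 0 L) hαc
        intro u hu
        rw [interior_Icc] at hu
        rw [((hα u ⟨hu.1.le, hu.2.le⟩).hasDerivAt (Icc_mem_nhds hu.1 hu.2)).deriv]
        exact hneg u ⟨hu.1.le, hu.2.le⟩
      obtain ⟨s, hsmem, t, htmem, hst, hXeq, hYeq⟩ := aux_core hL
        (fun s => ((m:ℝ) + 1) * (2*π) + α₀ - α s)
        (fun s => Real.cos α₀ * x s + Real.sin α₀ * y s)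
        (fun s => Real.sin α₀ * x s - Real.cos α₀ * y s)
        (continuousOn_const.sub hαc)
        (fun u hu v hv huv => by
          have := hantiα hu hv huv
          simp only
          linarith)
        (fun s hs => ⟨show (0:ℝ) < ((m:ℝ) + 1) * (2*π) + α₀ - α s by linarith [hup2 s hs, hα₀.1],
          show ((m:ℝ) + 1) * (2*π) + α₀ - α s < 2*π by linarith [hdown2 s hs, hα₀.2]⟩)
        (fun s hs => by
          have h1 := ((hx s hs).const_mul (Real.cos α₀)).add
            ((hy s hs).const_mul (Real.sin α₀))
          have h2 : Real.cos (((m:ℝ) + 1) * (2*π) + α₀ - α s) =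
              Real.cos α₀ * Real.cos (α s) + Real.sin α₀ * Real.sin (α s) := by
            rw [show ((m:ℝ) + 1) * (2*π) + α₀ - α s
                = -((α s - α₀) - ((m + 1 : ℤ) : ℝ) * (2*π)) from by push_cast; ring,
              Real.cos_neg, Real.cos_sub_int_mul_two_pi, Real.cos_sub]
            ring
          rw [h2]
          exact h1)
        (fun s hs => by
          have h1 := ((hx s hs).const_mul (Real.sin α₀)).sub
            ((hy s hs).const_mul (Real.cos α₀))
          have h2 : Real.sin (((m:ℝ) + 1) * (2*π) + α₀ - α s) =
              Real.sin α₀ * Real.cos (α s) - Real.cos α₀ * Real.sin (α s) := by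
            rw [show ((m:ℝ) + 1) * (2*π) + α₀ - α s
                = -((α s - α₀) - ((m + 1 : ℤ) : ℝ) * (2*π)) from by push_cast; ring,
              Real.sin_neg, Real.sin_sub_int_mul_two_pi, Real.sin_sub]
            ring
          rw [h2]
          exact h1)
        (show Real.sin α₀ * x 0 - Real.cos α₀ * y 0 = 0 by
          rw [hx0, hy0, mul_zero, mul_zero, sub_zero])
        (show Real.sin α₀ * x L - Real.cos α₀ * y L = 0 by
          rw [show Real.sin α₀ * x L - Real.cos α₀ * y L
            = -(Real.cos α₀ * y L - Real.sin α₀ * x L) from by ring, hYLv, neg_zero])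
        hX0L
      have hXeq' : Real.cos α₀ * x s + Real.sin α₀ * y s =
          Real.cos α₀ * x t + Real.sin α₀ * y t := hXeq
      have hYeq' : Real.sin α₀ * x s - Real.cos α₀ * y s =
          Real.sin α₀ * x t - Real.cos α₀ * y t := hYeq
      have hxeq : x s = x t := by
        have e1 : ∀ u : ℝ, Real.cos α₀ * (Real.cos α₀ * x u + Real.sin α₀ * y u) +
            Real.sin α₀ * (Real.sin α₀ * x u - Real.cos α₀ * y u) = x u := fun u => by
          linear_combination (x u) * hpy
        rw [← e1 s, ← e1 t, hXeq', hYeq']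
      have hyeq : y s = y t := by
        have e2 : ∀ u : ℝ, Real.sin α₀ * (Real.cos α₀ * x u + Real.sin α₀ * y u) -
            Real.cos α₀ * (Real.sin α₀ * x u - Real.cos α₀ * y u) = y u := fun u => by
          linear_combination (y u) * hpy
        rw [← e2 s, ← e2 t, hXeq', hYeq']
      exact hst (hinj hsmem htmem (show (x s, y s) = (x t, y t) from by rw [hxeq, hyeq]))
end

section
/- Let f : ℝ → ℝ be Lipschitz continuous with f(a) = f(b) = 0 for some real numbers a < b. Let α, T : [0,L] → ℝ with α continuously differentiable, T continuous, T(s) > 0 for all s ∈ [0,L], and T(s)·α'(s) = f(α(s)) for all s ∈ [0,L]. If α(s₀) ∈ [a,b] for some s₀ ∈ [0,L], then α(s) ∈ [a,b] for all s ∈ [0,L]. (The slope of a tensile solution is trapped between consecutive roots of the normal-load function: the vertical stripes between critical solutions are invariant.) -/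
open Real Set

/-- Let `f` be Lipschitz with `f a = f b = 0`, `a < b`.  Let `α` be C¹ and
`T` continuous and positive on `[0,L]` with `T s * α' s = f (α s)`.  If `α s₀ ∈ [a,b]`
for some `s₀ ∈ [0,L]`, then `α s ∈ [a,b]` for all `s ∈ [0,L]`: the vertical stripes
between critical solutions are invariant. -/
theorem slope_trapped_between_roots
    (f : ℝ → ℝ) (K : NNReal) (hf : LipschitzWith K f)
    (a b : ℝ) (hab : a < b) (hfa : f a = 0) (hfb : f b = 0)
    (L : ℝ) (α α' T : ℝ → ℝ)
    (hα : ∀ s ∈ Icc (0 : ℝ) L, HasDerivWithinAt α (α' s) (Icc (0 : ℝ) L) s)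
    (hα' : ContinuousOn α' (Icc (0 : ℝ) L))
    (hT : ContinuousOn T (Icc (0 : ℝ) L))
    (hTpos : ∀ s ∈ Icc (0 : ℝ) L, 0 < T s)
    (hode : ∀ s ∈ Icc (0 : ℝ) L, T s * α' s = f (α s))
    (s₀ : ℝ) (hs₀ : s₀ ∈ Icc (0 : ℝ) L) (hα₀ : α s₀ ∈ Icc a b) :
    ∀ s ∈ Icc (0 : ℝ) L, α s ∈ Icc a b := by
  -- minimum of T on the (nonempty) compact interval
  obtain ⟨m, hm, hmin⟩ := isCompact_Icc.exists_isMinOn ⟨s₀, hs₀⟩ hT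
  set c : ℝ := T m with hc
  have hcpos : 0 < c := hTpos m hm
  have hTc : ∀ s ∈ Icc (0 : ℝ) L, c ≤ T s := fun s hs => hmin hs
  -- the (uniformly Lipschitz) vector field
  set v : ℝ → ℝ → ℝ := fun t x => f x / max c (T t) with hv_def
  have hMpos : ∀ t, 0 < max c (T t) := fun t => lt_max_of_lt_left hcpos
  set C : NNReal := K * ⟨c, hcpos.le⟩⁻¹ with hC
  have hvlip : ∀ t, LipschitzWith C (v t) := by
    intro t
    rw [lipschitzWith_iff_dist_le_mul]
    intro x y
    have h1 : dist (v t x) (v t y) = dist (f x) (f y) / max c (T t) := by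
      simp only [hv_def, Real.dist_eq, ← sub_div, abs_div,
        abs_of_pos (hMpos t)]
    rw [h1]
    have h2 : dist (f x) (f y) ≤ K * dist x y := hf.dist_le_mul x y
    have h3 : dist (f x) (f y) / max c (T t) ≤ dist (f x) (f y) / c :=
      div_le_div_of_nonneg_left dist_nonneg hcpos (le_max_left _ _) |>.trans_eq rfl
    refine h3.trans ?_
    rw [div_le_iff₀ hcpos] at *
    have hCr : (C : ℝ) = (K : ℝ) * c⁻¹ := by rw [hC]; push_cast; rfl
    calc dist (f x) (f y) ≤ K * dist x y := h2
      _ ≤ (C : ℝ) * dist x y * c := by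
          rw [hCr, show (K:ℝ) * c⁻¹ * dist x y * c = (K:ℝ) * dist x y * (c⁻¹ * c) by ring,
            inv_mul_cancel₀ hcpos.ne', mul_one]
  -- α solves the ODE for v on [0,L]
  have hαode : ∀ s ∈ Icc (0 : ℝ) L, v s (α s) = α' s := by
    intro s hs
    have hTs : 0 < T s := hTpos s hs
    have hmax : max c (T s) = T s := max_eq_right (hTc s hs)
    rw [hv_def]
    simp only
    rw [hmax, ← hode s hs, mul_div_assoc, mul_comm]
    field_simp
  have hαcont : ContinuousOn α (Icc (0 : ℝ) L) := fun s hs => (hα s hs).continuousWithinAt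
  -- roots of f give constant solutions; uniqueness traps α
  have key : ∀ r : ℝ, f r = 0 → ∀ s₁ ∈ Icc (0 : ℝ) L, α s₁ = r →
      ∀ s ∈ Icc (0 : ℝ) L, α s = r := by
    intro r hr s₁ hs₁ hαs₁ s hs
    have hvr : ∀ t : ℝ, v t r = 0 := by intro t; simp [hv_def, hr]
    rcases le_total s₁ s with hle | hle
    · have := ODE_solution_unique_of_mem_Icc_right
        (v := v) (s := fun _ => (univ : Set ℝ)) (K := C)
        (fun t _ => (hvlip t).lipschitzOnWith)
        (f := α) (g := fun _ => r) (a := s₁) (b := s)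
        (hαcont.mono (Icc_subset_Icc hs₁.1 hs.2))
        (fun t ht => by
          have htI : t ∈ Icc (0 : ℝ) L := ⟨hs₁.1.trans ht.1, ht.2.le.trans hs.2⟩
          have htIco : t ∈ Ico (0 : ℝ) L := ⟨htI.1, lt_of_lt_of_le ht.2 hs.2⟩
          rw [hαode t htI]
          exact (hα t htI).mono_of_mem_nhdsWithin (Icc_mem_nhdsGE_of_mem htIco))
        (fun t _ => mem_univ _)
        continuousOn_const
        (fun t _ => by rw [hvr t]; exact hasDerivWithinAt_const _ _ _)
        (fun t _ => mem_univ _)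
        (by simpa using hαs₁)
      exact this ⟨hle, le_rfl⟩
    · have := ODE_solution_unique_of_mem_Icc_left
        (v := v) (s := fun _ => (univ : Set ℝ)) (K := C)
        (fun t _ => (hvlip t).lipschitzOnWith)
        (f := α) (g := fun _ => r) (a := s) (b := s₁)
        (hαcont.mono (Icc_subset_Icc hs.1 hs₁.2))
        (fun t ht => by
          have htI : t ∈ Icc (0 : ℝ) L := ⟨hs.1.trans ht.1.le, ht.2.trans hs₁.2⟩
          have htIoc : t ∈ Ioc (0 : ℝ) L := ⟨lt_of_le_of_lt hs.1 ht.1, htI.2⟩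
          rw [hαode t htI]
          exact (hα t htI).mono_of_mem_nhdsWithin (Icc_mem_nhdsLE_of_mem htIoc))
        (fun t _ => mem_univ _)
        continuousOn_const
        (fun t _ => by rw [hvr t]; exact hasDerivWithinAt_const _ _ _)
        (fun t _ => mem_univ _)
        (by simpa using hαs₁)
      exact this ⟨le_rfl, hle⟩
  -- trap using IVT
  intro s hs
  have huIcc : uIcc s₀ s ⊆ Icc (0 : ℝ) L := uIcc_subset_Icc hs₀ hs
  constructor
  · by_contra h
    push_neg at h
    have hmem : a ∈ uIcc (α s₀) (α s) := mem_uIcc.2 (Or.inr ⟨h.le, hα₀.1⟩)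
    obtain ⟨s₁, hs₁mem, hs₁⟩ := intermediate_value_uIcc (hαcont.mono huIcc) hmem
    have := key a hfa s₁ (huIcc hs₁mem) hs₁ s hs
    exact absurd this (by linarith)
  · by_contra h
    push_neg at h
    have hmem : b ∈ uIcc (α s₀) (α s) := mem_uIcc.2 (Or.inl ⟨hα₀.2, h.le⟩)
    obtain ⟨s₁, hs₁mem, hs₁⟩ := intermediate_value_uIcc (hαcont.mono huIcc) hmem
    have := key b hfb s₁ (huIcc hs₁mem) hs₁ s hs
    exact absurd this (by linarith)
end

section
/- Combined gravity and bridge load: let g, p > 0 and define f_n(θ) = cos(θ)·(g − p·cos(θ)) and f_t(θ) = sin(θ)·(g − p·cos(θ)). Let L > 0 and x₀ > 0 satisfy L/x₀ > p/g > 1. Then every taut string configuration (α, T, x, y) on [0,L] with normal load f_n and tangential load f_t satisfying the boundary conditions x(0) = 0, y(0) = 0, x(L) = x₀, y(L) = 0 is self-intersecting; i.e. the boundary value problem has no smooth solution. -/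
open Real Set

private lemma const_of_derivWithin_zero' {L : ℝ} {F : ℝ → ℝ}
    (h : ∀ s ∈ Icc (0:ℝ) L, HasDerivWithinAt F 0 (Icc (0:ℝ) L) s) :
    ∀ s ∈ Icc (0:ℝ) L, F s = F 0 := by
  have hcont : ContinuousOn F (Icc (0:ℝ) L) := fun s hs => (h s hs).continuousWithinAt
  exact constant_of_has_deriv_right_zero hcont fun t ht =>
    (h t (Ico_subset_Icc_self ht)).mono_of_mem_nhdsWithin (Icc_mem_nhdsGE_of_mem ht)


/-- Corollary 1: combined gravity and bridge load,
`f_n θ = cos θ * (g - p * cos θ)`, `f_t θ = sin θ * (g - p * cos θ)`, with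
`L / x₀ > p / g > 1`.  Then every taut string configuration on `[0,L]` with these
loads and boundary conditions `x 0 = 0`, `y 0 = 0`, `x L = x₀`, `y L = 0` is
self-intersecting: the BVP has no smooth solution. -/
theorem no_smooth_solution_gravity_bridge
    (g p : ℝ) (hg : 0 < g) (hp : 0 < p)
    (L x₀ : ℝ) (hL : 0 < L) (hx₀ : 0 < x₀)
    (hratio₁ : L / x₀ > p / g) (hratio₂ : p / g > 1)
    (α α' T x y : ℝ → ℝ)
    (hα : ∀ s ∈ Icc (0 : ℝ) L, HasDerivWithinAt α (α' s) (Icc (0 : ℝ) L) s)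
    (hα'c : ContinuousOn α' (Icc (0 : ℝ) L))
    (hT : ∀ s ∈ Icc (0 : ℝ) L,
      HasDerivWithinAt T (Real.sin (α s) * (g - p * Real.cos (α s)))
        (Icc (0 : ℝ) L) s)
    (hode : ∀ s ∈ Icc (0 : ℝ) L,
      T s * α' s = Real.cos (α s) * (g - p * Real.cos (α s)))
    (hx : ∀ s ∈ Icc (0 : ℝ) L, HasDerivWithinAt x (Real.cos (α s)) (Icc (0 : ℝ) L) s)
    (hy : ∀ s ∈ Icc (0 : ℝ) L, HasDerivWithinAt y (Real.sin (α s)) (Icc (0 : ℝ) L) s)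
    (htaut : ∀ s ∈ Icc (0 : ℝ) L, 0 < T s)
    (hx0 : x 0 = 0) (hy0 : y 0 = 0) (hxL : x L = x₀) (hyL : y L = 0) :
    ¬ InjOn (fun s => (x s, y s)) (Icc (0 : ℝ) L) := by
  intro _hinj
  have hmem0 : (0:ℝ) ∈ Icc (0:ℝ) L := ⟨le_refl 0, hL.le⟩
  have hmemL : L ∈ Icc (0:ℝ) L := ⟨hL.le, le_refl L⟩
  have hgp : g < p := by
    have := (one_lt_div hg).mp hratio₂; linarith
  have hpx : p * x₀ < g * L := by
    have := (div_lt_div_iff₀ hg hx₀).mp hratio₁; linarith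
  -- continuity facts
  have hTc : ContinuousOn T (Icc (0:ℝ) L) := fun s hs => (hT s hs).continuousWithinAt
  have hαc : ContinuousOn α (Icc (0:ℝ) L) := fun s hs => (hα s hs).continuousWithinAt
  have hxc : ContinuousOn x (Icc (0:ℝ) L) := fun s hs => (hx s hs).continuousWithinAt
  have hyc : ContinuousOn y (Icc (0:ℝ) L) := fun s hs => (hy s hs).continuousWithinAt
  -- horizontal tension is constant
  have hH : ∀ s ∈ Icc (0:ℝ) L, T s * Real.cos (α s) = T 0 * Real.cos (α 0) := by
    apply const_of_derivWithin_zero'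
    intro s hs
    have h1 := (hT s hs).mul ((hα s hs).cos)
    have h2 : Real.sin (α s) * (g - p * Real.cos (α s)) * Real.cos (α s)
        + T s * (-Real.sin (α s) * α' s) = 0 := by
      linear_combination (-Real.sin (α s)) * hode s hs
    exact h2 ▸ h1
  set H : ℝ := T 0 * Real.cos (α 0) with hHdef
  -- H > 0
  have hHpos : 0 < H := by
    by_contra hneg
    push_neg at hneg
    have hcosnp : ∀ s ∈ Icc (0:ℝ) L, Real.cos (α s) ≤ 0 := by
      intro s hs
      nlinarith [htaut s hs, hH s hs]
    have hanti : AntitoneOn x (Icc (0:ℝ) L) := by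
      apply antitoneOn_of_deriv_nonpos (convex_Icc 0 L) hxc
      · intro s hs
        rw [interior_Icc] at hs
        exact ((hx s (Ioo_subset_Icc_self hs)).hasDerivAt
          (Icc_mem_nhds hs.1 hs.2)).differentiableAt.differentiableWithinAt
      · intro s hs
        rw [interior_Icc] at hs
        rw [((hx s (Ioo_subset_Icc_self hs)).hasDerivAt (Icc_mem_nhds hs.1 hs.2)).deriv]
        exact hcosnp s (Ioo_subset_Icc_self hs)
    have := hanti hmem0 hmemL hL.le
    rw [hx0, hxL] at this
    linarith
  have hcospos : ∀ s ∈ Icc (0:ℝ) L, 0 < Real.cos (α s) := by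
    intro s hs
    nlinarith [htaut s hs, hH s hs]
  -- vertical tension V
  set V : ℝ → ℝ := fun s => T s * Real.sin (α s) with hVdef
  have hVc : ContinuousOn V (Icc (0:ℝ) L) :=
    hTc.mul (Real.continuous_sin.comp_continuousOn hαc)
  have hVd : ∀ s ∈ Icc (0:ℝ) L,
      HasDerivWithinAt V (g - p * Real.cos (α s)) (Icc (0:ℝ) L) s := by
    intro s hs
    have h1 := (hT s hs).mul ((hα s hs).sin)
    have h2 : Real.sin (α s) * (g - p * Real.cos (α s)) * Real.sin (α s)
        + T s * (Real.cos (α s) * α' s) = g - p * Real.cos (α s) := by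
      have h3 := hode s hs
      linear_combination Real.cos (α s) * h3 + (g - p * Real.cos (α s)) * Real.sin_sq_add_cos_sq (α s)
    exact h2 ▸ h1
  -- V is V 0 + g s - p x s
  have hVlin : ∀ s ∈ Icc (0:ℝ) L, V s = V 0 + g * s - p * x s := by
    have h0 : ∀ s ∈ Icc (0:ℝ) L,
        HasDerivWithinAt (fun s => V s - (g * s - p * x s)) 0 (Icc (0:ℝ) L) s := by
      intro s hs
      have h1 : HasDerivWithinAt (fun s => g * s - p * x s)
          (g - p * Real.cos (α s)) (Icc (0:ℝ) L) s := by
        have := ((hasDerivWithinAt_id s (Icc (0:ℝ) L)).const_mul g).sub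
          ((hx s hs).const_mul p)
        exact this.congr_deriv (by ring)
      exact ((hVd s hs).sub h1).congr_deriv (by ring)
    intro s hs
    have := const_of_derivWithin_zero' h0 s hs
    simp only [hx0] at this
    have h2 : V s - (g * s - p * x s) = V 0 - (g * 0 - p * 0) := this
    ring_nf at h2 ⊢
    linarith
  have hVL : V 0 < V L := by
    have := hVlin L hmemL
    rw [hxL] at this
    linarith
  -- if sin α vanishes on Ioo, contradiction with hVL
  have hnotzero : ¬ (∀ s ∈ Ioo (0:ℝ) L, Real.sin (α s) = 0) := by
    intro hz
    have hVz : ∀ s ∈ Ioo (0:ℝ) L, V s = 0 := by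
      intro s hs; simp [hVdef, hz s hs]
    have hne0 : (nhdsWithin (0:ℝ) (Ioo (0:ℝ) L)).NeBot := by
      rw [← mem_closure_iff_nhdsWithin_neBot, closure_Ioo hL.ne]
      exact ⟨le_refl 0, hL.le⟩
    have hneL : (nhdsWithin L (Ioo (0:ℝ) L)).NeBot := by
      rw [← mem_closure_iff_nhdsWithin_neBot, closure_Ioo hL.ne]
      exact ⟨hL.le, le_refl L⟩
    have hev : ∀ z : ℝ, Filter.Tendsto V (nhdsWithin z (Ioo (0:ℝ) L)) (nhds 0) := by
      intro z
      exact Filter.Tendsto.congr' (Filter.eventually_of_mem self_mem_nhdsWithin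
        fun s hs => (hVz s hs).symm) tendsto_const_nhds
    have hV0 : V 0 = 0 :=
      tendsto_nhds_unique ((hVc 0 hmem0).mono Ioo_subset_Icc_self) (hev 0)
    have hVL0 : V L = 0 :=
      tendsto_nhds_unique ((hVc L hmemL).mono Ioo_subset_Icc_self) (hev L)
    rw [hV0, hVL0] at hVL
    exact lt_irrefl 0 hVL
  -- key: V cannot cross zero upward
  have hkey : ∀ b ∈ Icc (0:ℝ) L, V b < 0 → ∀ c ∈ Icc (0:ℝ) L, b ≤ c → V c ≤ 0 := by
    intro b hb hVb c hc hbc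
    by_contra hVc'
    push_neg at hVc'
    have hbc' : b < c := lt_of_le_of_ne hbc (by rintro rfl; linarith)
    set S : Set ℝ := Icc b c ∩ V ⁻¹' Iic 0 with hSdef
    have hbS : b ∈ S := ⟨⟨le_refl b, hbc⟩, hVb.le⟩
    have hSsub : Icc b c ⊆ Icc (0:ℝ) L := Icc_subset_Icc hb.1 hc.2
    have hSbdd : BddAbove S := ⟨c, fun t ht => ht.1.2⟩
    have hSclosed : IsClosed S :=
      (hVc.mono hSsub).preimage_isClosed_of_isClosed isClosed_Icc isClosed_Iic
    set z : ℝ := sSup S with hzdef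
    have hzS : z ∈ S := hSclosed.csSup_mem ⟨b, hbS⟩ hSbdd
    have hzmem : z ∈ Icc (0:ℝ) L := hSsub hzS.1
    have hzc : z < c := lt_of_le_of_ne hzS.1.2
      (fun h => absurd (h ▸ hzS.2) (not_le.mpr hVc'))
    have hpos : ∀ s ∈ Ioc z c, 0 < V s := by
      intro s hs
      by_contra hsn
      push_neg at hsn
      have hsS : s ∈ S := ⟨⟨hzS.1.1.trans hs.1.le, hs.2⟩, hsn⟩
      exact absurd (le_csSup hSbdd hsS) (not_le.mpr hs.1)
    have hIocsub : Ioc z c ⊆ Icc (0:ℝ) L := fun s hs =>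
      ⟨hzmem.1.trans hs.1.le, hs.2.trans hc.2⟩
    have hnez : (nhdsWithin z (Ioc z c)).NeBot := by
      rw [← mem_closure_iff_nhdsWithin_neBot, closure_Ioc hzc.ne]
      exact ⟨le_refl z, hzc.le⟩
    have hVz : V z = 0 := by
      refine le_antisymm hzS.2 ?_
      refine ge_of_tendsto ((hVc z hzmem).mono hIocsub) ?_
      exact Filter.eventually_of_mem self_mem_nhdsWithin fun s hs => (hpos s hs).le
    have hsinz : Real.sin (α z) = 0 := by
      have hTz := htaut z hzmem
      have : T z * Real.sin (α z) = 0 := hVz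
      rcases mul_eq_zero.mp this with h | h
      · exact absurd h hTz.ne'
      · exact h
    have hcosz : Real.cos (α z) = 1 := by
      have h1 : (Real.cos (α z) - 1) * (Real.cos (α z) + 1) = 0 := by
        have := Real.sin_sq_add_cos_sq (α z)
        linear_combination this - hsinz * Real.sin (α z)
      rcases mul_eq_zero.mp h1 with h | h
      · linarith
      · have := hcospos z hzmem; linarith
    -- derivative of V at z is g - p < 0, but slopes to the right are ≥ 0
    have hdV : HasDerivWithinAt V (g - p) (Ioc z c) z := by
      have := (hVd z hzmem).mono hIocsub
      rwa [hcosz, mul_one] at this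
    rw [hasDerivWithinAt_iff_tendsto_slope,
      Set.diff_singleton_eq_self (by simp)] at hdV
    have hslope : 0 ≤ g - p := by
      refine ge_of_tendsto hdV ?_
      refine Filter.eventually_of_mem self_mem_nhdsWithin fun s hs => ?_
      have h1 : 0 < s - z := by linarith [hs.1]
      rw [slope_def_field, hVz, sub_zero]
      exact div_nonneg (hpos s hs).le h1.le
    linarith
  -- get a point where V < 0
  have hNeg : ∃ b ∈ Icc (0:ℝ) L, V b < 0 := by
    by_contra hall
    push_neg at hall
    apply hnotzero
    -- y is monotone, so y ≡ 0
    have hall' : ∀ s ∈ Icc (0:ℝ) L, 0 ≤ T s * Real.sin (α s) := by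
      intro s hs; simpa [hVdef] using hall s hs
    have hsinnn : ∀ s ∈ Icc (0:ℝ) L, 0 ≤ Real.sin (α s) := by
      intro s hs
      nlinarith [htaut s hs, hall' s hs]
    have hmono : MonotoneOn y (Icc (0:ℝ) L) := by
      apply monotoneOn_of_deriv_nonneg (convex_Icc 0 L) hyc
      · intro s hs
        rw [interior_Icc] at hs
        exact ((hy s (Ioo_subset_Icc_self hs)).hasDerivAt
          (Icc_mem_nhds hs.1 hs.2)).differentiableAt.differentiableWithinAt
      · intro s hs
        rw [interior_Icc] at hs
        rw [((hy s (Ioo_subset_Icc_self hs)).hasDerivAt (Icc_mem_nhds hs.1 hs.2)).deriv]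
        exact hsinnn s (Ioo_subset_Icc_self hs)
    have hyzero : ∀ s ∈ Icc (0:ℝ) L, y s = 0 := by
      intro s hs
      have h1 := hmono hmem0 hs hs.1
      have h2 := hmono hs hmemL hs.2
      rw [hy0] at h1; rw [hyL] at h2
      linarith
    intro s hs
    have hnbhd : Icc (0:ℝ) L ∈ nhds s := Icc_mem_nhds hs.1 hs.2
    have hyd : HasDerivAt y (Real.sin (α s)) s :=
      (hy s (Ioo_subset_Icc_self hs)).hasDerivAt hnbhd
    have heq : (fun _ => (0:ℝ)) =ᶠ[nhds s] y :=
      Filter.eventuallyEq_of_mem hnbhd fun t ht => (hyzero t ht).symm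
    have hyd0 : HasDerivAt (fun _ => (0:ℝ)) (Real.sin (α s)) s :=
      hyd.congr_of_eventuallyEq heq
    exact ((hasDerivAt_const s (0:ℝ)).unique hyd0).symm
  obtain ⟨b, hb, hVb⟩ := hNeg
  have hVLle : V L ≤ 0 := hkey b hb hVb L hmemL hb.2
  by_cases h0 : V 0 < 0
  · -- V ≤ 0 everywhere, y antitone, y ≡ 0, contradiction
    have hle : ∀ s ∈ Icc (0:ℝ) L, V s ≤ 0 := fun s hs => hkey 0 hmem0 h0 s hs hs.1
    apply hnotzero
    have hle' : ∀ s ∈ Icc (0:ℝ) L, T s * Real.sin (α s) ≤ 0 := by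
      intro s hs; simpa [hVdef] using hle s hs
    have hsinnp : ∀ s ∈ Icc (0:ℝ) L, Real.sin (α s) ≤ 0 := by
      intro s hs
      nlinarith [htaut s hs, hle' s hs]
    have hanti : AntitoneOn y (Icc (0:ℝ) L) := by
      apply antitoneOn_of_deriv_nonpos (convex_Icc 0 L) hyc
      · intro s hs
        rw [interior_Icc] at hs
        exact ((hy s (Ioo_subset_Icc_self hs)).hasDerivAt
          (Icc_mem_nhds hs.1 hs.2)).differentiableAt.differentiableWithinAt
      · intro s hs
        rw [interior_Icc] at hs
        rw [((hy s (Ioo_subset_Icc_self hs)).hasDerivAt (Icc_mem_nhds hs.1 hs.2)).deriv]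
        exact hsinnp s (Ioo_subset_Icc_self hs)
    have hyzero : ∀ s ∈ Icc (0:ℝ) L, y s = 0 := by
      intro s hs
      have h1 := hanti hmem0 hs hs.1
      have h2 := hanti hs hmemL hs.2
      rw [hy0] at h1; rw [hyL] at h2
      linarith
    intro s hs
    have hnbhd : Icc (0:ℝ) L ∈ nhds s := Icc_mem_nhds hs.1 hs.2
    have hyd : HasDerivAt y (Real.sin (α s)) s :=
      (hy s (Ioo_subset_Icc_self hs)).hasDerivAt hnbhd
    have heq : (fun _ => (0:ℝ)) =ᶠ[nhds s] y :=
      Filter.eventuallyEq_of_mem hnbhd fun t ht => (hyzero t ht).symm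
    have hyd0 : HasDerivAt (fun _ => (0:ℝ)) (Real.sin (α s)) s :=
      hyd.congr_of_eventuallyEq heq
    exact ((hasDerivAt_const s (0:ℝ)).unique hyd0).symm
  · push_neg at h0
    linarith
end

section
/- Combined gravity and Newtonian wind load: let g, w > 0 and define f_n(θ) = cos(θ)·(g − w·cos(θ)) and f_t(θ) = g·sin(θ). Let L > 0 and x₀ > 0 satisfy L/x₀ > w/g > 1. Then every taut string configuration (α, T, x, y) on [0,L] with normal load f_n and tangential load f_t satisfying the boundary conditions x(0) = 0, y(0) = 0, x(L) = x₀, y(L) = 0 is self-intersecting; i.e. the boundary value problem has no smooth solution. -/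
open Real Set

/-- Corollary 2: combined gravity and Newtonian wind load,
`f_n θ = cos θ * (g - w * cos θ)`, `f_t θ = g * sin θ`, with `L / x₀ > w / g > 1`.
Then every taut string configuration on `[0,L]` with these loads and boundary
conditions `x 0 = 0`, `y 0 = 0`, `x L = x₀`, `y L = 0` is self-intersecting:
the BVP has no smooth solution. -/
theorem no_smooth_solution_gravity_wind
    (g w : ℝ) (hg : 0 < g) (hw : 0 < w)
    (L x₀ : ℝ) (hL : 0 < L) (hx₀ : 0 < x₀)
    (hratio₁ : L / x₀ > w / g) (hratio₂ : w / g > 1)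
    (α α' T x y : ℝ → ℝ)
    (hα : ∀ s ∈ Icc (0 : ℝ) L, HasDerivWithinAt α (α' s) (Icc (0 : ℝ) L) s)
    (hα'c : ContinuousOn α' (Icc (0 : ℝ) L))
    (hT : ∀ s ∈ Icc (0 : ℝ) L,
      HasDerivWithinAt T (g * Real.sin (α s)) (Icc (0 : ℝ) L) s)
    (hode : ∀ s ∈ Icc (0 : ℝ) L,
      T s * α' s = Real.cos (α s) * (g - w * Real.cos (α s)))
    (hx : ∀ s ∈ Icc (0 : ℝ) L, HasDerivWithinAt x (Real.cos (α s)) (Icc (0 : ℝ) L) s)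
    (hy : ∀ s ∈ Icc (0 : ℝ) L, HasDerivWithinAt y (Real.sin (α s)) (Icc (0 : ℝ) L) s)
    (htaut : ∀ s ∈ Icc (0 : ℝ) L, 0 < T s)
    (hx0 : x 0 = 0) (hy0 : y 0 = 0) (hxL : x L = x₀) (hyL : y L = 0) :
    ¬ InjOn (fun s => (x s, y s)) (Icc (0 : ℝ) L) := by
  intro _
  -- basic consequences of the ratio hypotheses
  have hgw : g < w := by
    have h := hratio₂
    rw [gt_iff_lt, lt_div_iff₀ hg, one_mul] at h
    exact h
  have hx₀L : x₀ / L < g / w := by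
    have h1 : w / g < L / x₀ := hratio₁
    rw [div_lt_div_iff₀ hg hx₀] at h1
    rw [div_lt_div_iff₀ hL hw]
    linarith
  -- continuity
  have hαc : ContinuousOn α (Icc 0 L) := fun s hs => (hα s hs).continuousWithinAt
  have hTc : ContinuousOn T (Icc 0 L) := fun s hs => (hT s hs).continuousWithinAt
  have hxc : ContinuousOn x (Icc 0 L) := fun s hs => (hx s hs).continuousWithinAt
  have hyc : ContinuousOn y (Icc 0 L) := fun s hs => (hy s hs).continuousWithinAt
  -- MVT for x and y
  obtain ⟨c, hc, hceq⟩ := exists_hasDerivAt_eq_slope x (fun s => Real.cos (α s)) hL hxc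
    (fun s hs => (hx s (Ioo_subset_Icc_self hs)).hasDerivAt (Icc_mem_nhds hs.1 hs.2))
  obtain ⟨d, hd, hdeq⟩ := exists_hasDerivAt_eq_slope y (fun s => Real.sin (α s)) hL hyc
    (fun s hs => (hy s (Ioo_subset_Icc_self hs)).hasDerivAt (Icc_mem_nhds hs.1 hs.2))
  simp only [hx0, hxL, sub_zero] at hceq
  simp only [hy0, hyL, sub_zero, zero_div] at hdeq
  -- the key function q = cos α * (g - w cos α)
  set q : ℝ → ℝ := fun s => Real.cos (α s) * (g - w * Real.cos (α s)) with hqdef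
  have hqc : 0 < q c := by
    have h0 : 0 < x₀ / L := div_pos hx₀ hL
    have h1 : x₀ / L * w < g := (lt_div_iff₀ hw).mp hx₀L
    simp only [hqdef]
    rw [hceq]
    nlinarith
  have hcos2 : (Real.cos (α d) - 1) * (Real.cos (α d) + 1) = 0 := by
    linear_combination Real.sin_sq_add_cos_sq (α d) - Real.sin (α d) * hdeq
  have hqd : q d < 0 := by
    simp only [hqdef]
    rcases mul_eq_zero.mp hcos2 with h | h
    · have hce : Real.cos (α d) = 1 := by linarith
      rw [hce]; nlinarith
    · have hce : Real.cos (α d) = -1 := by linarith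
      rw [hce]; nlinarith
  have hc01 : c ∈ Icc (0:ℝ) L := Ioo_subset_Icc_self hc
  have hd01 : d ∈ Icc (0:ℝ) L := Ioo_subset_Icc_self hd
  have hsubIcc : uIcc c d ⊆ Icc (0:ℝ) L := by
    intro s hs
    rcases Set.mem_uIcc.mp hs with ⟨h1, h2⟩ | ⟨h1, h2⟩
    · exact ⟨le_trans hc01.1 h1, le_trans h2 hd01.2⟩
    · exact ⟨le_trans hd01.1 h1, le_trans h2 hc01.2⟩
  have hqcont : ContinuousOn q (Icc 0 L) :=
    (Real.continuous_cos.comp_continuousOn hαc).mul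
      (continuousOn_const.sub (continuousOn_const.mul
        (Real.continuous_cos.comp_continuousOn hαc)))
  -- IVT: q vanishes at some z between c and d
  have h0mem : (0:ℝ) ∈ uIcc (q c) (q d) :=
    Set.mem_uIcc.mpr (Or.inr ⟨le_of_lt hqd, le_of_lt hqc⟩)
  obtain ⟨z, hz, hz0⟩ := intermediate_value_uIcc (hqcont.mono hsubIcc) h0mem
  set m := max c d with hm
  have hzm : z ≤ m := by
    rcases Set.mem_uIcc.mp hz with ⟨_, h2⟩ | ⟨_, h2⟩
    · exact le_trans h2 (le_max_right c d)
    · exact le_trans h2 (le_max_left c d)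
  have hzpos : 0 < z := by
    rcases Set.mem_uIcc.mp hz with ⟨h1, _⟩ | ⟨h1, _⟩
    · exact lt_of_lt_of_le hc.1 h1
    · exact lt_of_lt_of_le hd.1 h1
  have hmIoo : m ∈ Ioo (0:ℝ) L := by
    rcases max_cases c d with ⟨h, _⟩ | ⟨h, _⟩ <;> rw [hm, h] <;> assumption
  have hqm : q m ≠ 0 := by
    rcases max_cases c d with ⟨h, _⟩ | ⟨h, _⟩ <;> rw [hm, h]
    · exact ne_of_gt hqc
    · exact ne_of_lt hqd
  -- minimum of T
  obtain ⟨sm, hsm, hsmin⟩ := isCompact_Icc.exists_isMinOn (nonempty_Icc.mpr hL.le) hTc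
  have hTm : 0 < T sm := htaut sm hsm
  set K := (g + 2 * w) / T sm with hK
  -- q satisfies a linear ODE
  set q' : ℝ → ℝ := fun s => (-Real.sin (α s) * α' s) * (g - 2 * w * Real.cos (α s)) with hq'
  have hqderiv : ∀ s ∈ Icc (0:ℝ) L, HasDerivWithinAt q (q' s) (Icc 0 L) s := by
    intro s hs
    have h1 : HasDerivWithinAt (fun t => Real.cos (α t)) (-Real.sin (α s) * α' s)
        (Icc 0 L) s := (Real.hasDerivAt_cos (α s)).comp_hasDerivWithinAt s (hα s hs)
    have h4 : HasDerivWithinAt (fun t => Real.cos (α t) * (g - w * Real.cos (α t)))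
        ((-Real.sin (α s) * α' s) * (g - w * Real.cos (α s)) +
          Real.cos (α s) * (0 - w * (-Real.sin (α s) * α' s))) (Icc 0 L) s :=
      h1.mul ((hasDerivWithinAt_const s _ g).sub (h1.const_mul w))
    have heq : q' s = (-Real.sin (α s) * α' s) * (g - w * Real.cos (α s)) +
          Real.cos (α s) * (0 - w * (-Real.sin (α s) * α' s)) := by
      simp only [hq']; ring
    rw [hqdef, heq]
    exact h4
  -- the linear bound |q'| ≤ K |q|
  have hbound : ∀ s ∈ Icc (0:ℝ) L, |q' s| ≤ K * |q s| := by
    intro s hs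
    have hTs : 0 < T s := htaut s hs
    have hTle : T sm ≤ T s := hsmin hs
    have hα's : α' s = q s / T s := by
      rw [eq_div_iff (ne_of_gt hTs)]
      have h := hode s hs
      simp only [hqdef]
      linarith
    have heq : |q' s| = |Real.sin (α s)| * |g - 2 * w * Real.cos (α s)| * (|q s| / T s) := by
      simp only [hq', hα's, abs_mul, abs_neg, abs_div, abs_of_pos hTs]
      ring
    have h1 : |Real.sin (α s)| ≤ 1 := Real.abs_sin_le_one (α s)
    have h2 : |g - 2 * w * Real.cos (α s)| ≤ g + 2 * w := by
      have hc1 : |Real.cos (α s)| ≤ 1 := Real.abs_cos_le_one (α s)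
      rw [abs_le] at hc1 ⊢
      constructor <;> nlinarith
    rw [heq]
    calc |Real.sin (α s)| * |g - 2 * w * Real.cos (α s)| * (|q s| / T s)
        ≤ 1 * (g + 2 * w) * (|q s| / T sm) := by
          gcongr
      _ = K * |q s| := by rw [hK]; ring
  -- Grönwall: q ≡ 0 on [z, m], contradiction with q m ≠ 0
  have hIoo : ∀ t ∈ Ico z m, t ∈ Ioo (0:ℝ) L := fun t ht =>
    ⟨lt_of_lt_of_le hzpos ht.1, lt_trans ht.2 hmIoo.2⟩
  have hsub2 : Icc z m ⊆ Icc (0:ℝ) L :=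
    Icc_subset_Icc (le_of_lt hzpos) (le_of_lt hmIoo.2)
  have key : ∀ t ∈ Icc z m, ‖q t‖ ≤ gronwallBound 0 K 0 (t - z) := by
    apply norm_le_gronwallBound_of_norm_deriv_right_le (hqcont.mono hsub2)
    · intro t ht
      have htI := hIoo t ht
      exact ((hqderiv t (Ioo_subset_Icc_self htI)).hasDerivAt
        (Icc_mem_nhds htI.1 htI.2)).hasDerivWithinAt
    · simp [hz0]
    · intro t ht
      have := hbound t (Ioo_subset_Icc_self (hIoo t ht))
      simpa [Real.norm_eq_abs] using this
  have hfin := key m (right_mem_Icc.mpr hzm)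
  rw [gronwallBound_ε0_δ0] at hfin
  exact hqm (norm_le_zero_iff.mp hfin)
end

section
/- Combined gravity and hydrostatic pressure: let g, h > 0 and define f_n(θ) = g·cos(θ) − h and f_t(θ) = g·sin(θ). Let L > 0 and x₀ > 0 satisfy x₀/L < h/g < 1. Then every taut string configuration (α, T, x, y) on [0,L] with normal load f_n and tangential load f_t satisfying the boundary conditions x(0) = 0, y(0) = 0, x(L) = x₀, y(L) = 0 is self-intersecting; i.e. the boundary value problem has no smooth solution. -/
open Real Set Filter Topology

private lemma constOn {a b : ℝ} {f f' : ℝ → ℝ}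
    (hf : ∀ s ∈ Icc a b, HasDerivWithinAt f (f' s) (Icc a b) s)
    (hz : ∀ s ∈ Icc a b, f' s = 0) : ∀ s ∈ Icc a b, f s = f a := by
  apply constant_of_has_deriv_right_zero
  · exact fun s hs => (hf s hs).continuousWithinAt
  · intro s hs
    have h1 := hf s (Ico_subset_Icc_self hs)
    rw [hz s (Ico_subset_Icc_self hs)] at h1
    exact h1.mono_of_mem_nhdsWithin (Icc_mem_nhdsGE_of_mem hs)

set_option maxHeartbeats 2000000 in
/-- Corollary 3: combined gravity and hydrostatic pressure,
`f_n θ = g * cos θ - h`, `f_t θ = g * sin θ`, with `x₀ / L < h / g < 1`.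
Then every taut string configuration on `[0,L]` with these loads and boundary
conditions `x 0 = 0`, `y 0 = 0`, `x L = x₀`, `y L = 0` is self-intersecting:
the BVP has no smooth solution. -/
theorem no_smooth_solution_gravity_hydrostatic
    (g h : ℝ) (hg : 0 < g) (hh : 0 < h)
    (L x₀ : ℝ) (hL : 0 < L) (hx₀ : 0 < x₀)
    (hratio₁ : x₀ / L < h / g) (hratio₂ : h / g < 1)
    (α α' T x y : ℝ → ℝ)
    (hα : ∀ s ∈ Icc (0 : ℝ) L, HasDerivWithinAt α (α' s) (Icc (0 : ℝ) L) s)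
    (hα'c : ContinuousOn α' (Icc (0 : ℝ) L))
    (hT : ∀ s ∈ Icc (0 : ℝ) L,
      HasDerivWithinAt T (g * Real.sin (α s)) (Icc (0 : ℝ) L) s)
    (hode : ∀ s ∈ Icc (0 : ℝ) L, T s * α' s = g * Real.cos (α s) - h)
    (hx : ∀ s ∈ Icc (0 : ℝ) L, HasDerivWithinAt x (Real.cos (α s)) (Icc (0 : ℝ) L) s)
    (hy : ∀ s ∈ Icc (0 : ℝ) L, HasDerivWithinAt y (Real.sin (α s)) (Icc (0 : ℝ) L) s)
    (htaut : ∀ s ∈ Icc (0 : ℝ) L, 0 < T s)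
    (hx0 : x 0 = 0) (hy0 : y 0 = 0) (hxL : x L = x₀) (hyL : y L = 0) :
    ¬ InjOn (fun s => (x s, y s)) (Icc (0 : ℝ) L) := by
  intro hinj
  have hI0 : (0:ℝ) ∈ Icc (0:ℝ) L := ⟨le_rfl, hL.le⟩
  have hIL : L ∈ Icc (0:ℝ) L := ⟨hL.le, le_rfl⟩
  set k : ℝ := h / g with hkdef
  have hgk : g * k = h := by rw [hkdef]; field_simp [hg.ne']
  have hk1 : k < 1 := hratio₂
  have hkpos : 0 < k := div_pos hh hg
  have hT0 : 0 < T 0 := htaut 0 hI0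
  -- continuity
  have hαc : ContinuousOn α (Icc 0 L) := fun s hs => (hα s hs).continuousWithinAt
  have hxc : ContinuousOn x (Icc 0 L) := fun s hs => (hx s hs).continuousWithinAt
  have hyc : ContinuousOn y (Icc 0 L) := fun s hs => (hy s hs).continuousWithinAt
  -- invariant 1 : T * (cos α - k) is constant
  have hF1 : ∀ s ∈ Icc (0:ℝ) L,
      T s * (Real.cos (α s) - k) = T 0 * (Real.cos (α 0) - k) := by
    apply constOn (f' := fun s =>
      g * Real.sin (α s) * (Real.cos (α s) - k) + T s * (-Real.sin (α s) * α' s))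
    · intro s hs
      exact (hT s hs).mul
        (((Real.hasDerivAt_cos (α s)).comp_hasDerivWithinAt s (hα s hs)).sub_const k)
    · intro s hs
      have h2 : T s * (-Real.sin (α s) * α' s)
          = -Real.sin (α s) * (g * Real.cos (α s) - h) := by
        rw [← hode s hs]; ring
      rw [h2, ← hgk]; ring
  -- invariant 2 : T - g * y is constant, so T s = T 0 + g * y s
  have hF2 : ∀ s ∈ Icc (0:ℝ) L, T s = T 0 + g * y s := by
    have := constOn (f := fun s => T s - g * y s)
      (f' := fun s => g * Real.sin (α s) - g * Real.sin (α s))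
      (fun s hs => (hT s hs).sub ((hy s hs).const_mul g))
      (fun s hs => sub_self _)
    intro s hs
    have h1 := this s hs
    simp only [hy0] at h1
    linarith
  have hTL : T L = T 0 := by have := hF2 L hIL; rw [hyL] at this; linarith
  -- invariant 3 : T * sin α + (h * x - g * s) constant
  have hF3 : ∀ s ∈ Icc (0:ℝ) L,
      T s * Real.sin (α s) + (h * x s - g * s)
        = T 0 * Real.sin (α 0) + (h * x 0 - g * 0) := by
    apply constOn (f' := fun s =>
      g * Real.sin (α s) * Real.sin (α s) + T s * (Real.cos (α s) * α' s)
        + (h * Real.cos (α s) - g * 1))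
    · intro s hs
      exact ((hT s hs).mul
        ((Real.hasDerivAt_sin (α s)).comp_hasDerivWithinAt s (hα s hs))).add
        (((hx s hs).const_mul h).sub ((hasDerivWithinAt_id s _).const_mul g))
    · intro s hs
      have h2 : T s * (Real.cos (α s) * α' s)
          = Real.cos (α s) * (g * Real.cos (α s) - h) := by
        rw [← hode s hs]; ring
      rw [h2]
      linear_combination g * (Real.sin_sq_add_cos_sq (α s))
  -- cos α L = cos α 0
  have hcos_eq : Real.cos (α L) = Real.cos (α 0) := by
    have h1 := hF1 L hIL
    rw [hTL] at h1
    have := mul_left_cancel₀ hT0.ne' h1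
    linarith
  -- sin α L > 0 > sin α 0
  have hhg' : h < g := by rwa [div_lt_one hg] at hratio₂
  have hx₀L : x₀ < L := by
    have := hratio₁.trans hratio₂; rwa [div_lt_one hL] at this
  have hdpos : 0 < g * L - h * x₀ := by nlinarith
  have hd : T 0 * (Real.sin (α L) - Real.sin (α 0)) = g * L - h * x₀ := by
    have h1 := hF3 L hIL
    rw [hTL, hx0, hxL] at h1
    linarith
  have hsinne : Real.sin (α L) ≠ Real.sin (α 0) := by
    intro hcon; rw [hcon] at hd; simp at hd; linarith
  have hsum : Real.sin (α L) + Real.sin (α 0) = 0 := by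
    have hsq : Real.sin (α L) ^ 2 = Real.sin (α 0) ^ 2 := by
      have e1 := Real.sin_sq_add_cos_sq (α L)
      have e2 := Real.sin_sq_add_cos_sq (α 0)
      rw [hcos_eq] at e1; linarith
    have : (Real.sin (α L) - Real.sin (α 0)) * (Real.sin (α L) + Real.sin (α 0)) = 0 := by
      nlinarith
    rcases mul_eq_zero.mp this with h1 | h1
    · exact absurd (by linarith : Real.sin (α L) = Real.sin (α 0)) hsinne
    · exact h1
  have hsinL : 0 < Real.sin (α L) := by nlinarith
  have hsin0 : Real.sin (α 0) < 0 := by linarith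
  -- x₀ < k * L
  have hx0kL : x₀ < k * L := by
    rw [div_lt_div_iff₀ hL hg] at hratio₁
    nlinarith
  -- trichotomy on c = T 0 * (cos α 0 - k)
  rcases lt_trichotomy (T 0 * (Real.cos (α 0) - k)) 0 with hcneg | hc0 | hcpos
  · -- main case: cos α < k everywhere
    have hcoslt : ∀ s ∈ Icc (0:ℝ) L, Real.cos (α s) < k := by
      intro s hs
      have h1 := hF1 s hs
      nlinarith [htaut s hs]
    -- α strictly decreasing
    have hα'neg : ∀ s ∈ Icc (0:ℝ) L, α' s < 0 := by
      intro s hs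
      have h1 : T s * α' s < 0 := by
        rw [hode s hs, ← hgk]
        nlinarith [hcoslt s hs]
      by_contra hcon
      push_neg at hcon
      nlinarith [htaut s hs]
    have hαanti : StrictAntiOn α (Icc 0 L) := by
      apply strictAntiOn_of_deriv_neg (convex_Icc 0 L) hαc
      intro s hs
      rw [interior_Icc] at hs
      have hD : HasDerivAt α (α' s) s :=
        (hα s (Ioo_subset_Icc_self hs)).hasDerivAt (Icc_mem_nhds hs.1 hs.2)
      rw [hD.deriv]
      exact hα'neg s (Ioo_subset_Icc_self hs)
    -- global minimum of y
    obtain ⟨sstar, hsI, hsmin'⟩ :=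
      isCompact_Icc.exists_isMinOn (nonempty_Icc.mpr hL.le) hyc
    have hsmin : ∀ s ∈ Icc (0:ℝ) L, y sstar ≤ y s := fun s hs => hsmin' hs
    set m : ℝ := y sstar with hmdef
    -- m < 0 : y decreases initially
    have hm_neg : m < 0 := by
      have hsinc : ContinuousOn (fun s => Real.sin (α s)) (Icc 0 L) :=
        Real.continuous_sin.comp_continuousOn hαc
      have hev : ∀ᶠ s in 𝓝[Icc (0:ℝ) L] 0, Real.sin (α s) < 0 :=
        Filter.Tendsto.eventually_lt_const hsin0 (hsinc 0 hI0)
      rw [eventually_nhdsWithin_iff] at hev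
      obtain ⟨ε, hε, hball⟩ := Metric.eventually_nhds_iff.mp hev
      set δ : ℝ := min (ε / 2) L with hδdef
      have hδpos : 0 < δ := lt_min (by linarith) hL
      have hδL : δ ≤ L := min_le_right _ _
      have hδε : δ < ε := lt_of_le_of_lt (min_le_left _ _) (by linarith)
      have hsinneg0 : ∀ s ∈ Icc (0:ℝ) δ, Real.sin (α s) < 0 := by
        intro s hs
        have hdist : dist s 0 < ε := by
          rw [Real.dist_eq, sub_zero, abs_of_nonneg hs.1]
          linarith [hs.2]
        exact hball hdist ⟨hs.1, hs.2.trans hδL⟩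
      have hanti : StrictAntiOn y (Icc 0 δ) := by
        apply strictAntiOn_of_deriv_neg (convex_Icc 0 δ)
          (hyc.mono (Icc_subset_Icc le_rfl hδL))
        intro s hs
        rw [interior_Icc] at hs
        have hsmem : s ∈ Icc (0:ℝ) L := ⟨hs.1.le, hs.2.le.trans hδL⟩
        have hD : HasDerivAt y (Real.sin (α s)) s :=
          (hy s hsmem).hasDerivAt (Icc_mem_nhds hs.1 (lt_of_lt_of_le hs.2 hδL))
        rw [hD.deriv]
        exact hsinneg0 s (Ioo_subset_Icc_self hs)
      have h2 : y δ < y 0 := hanti (left_mem_Icc.mpr hδpos.le) (right_mem_Icc.mpr hδpos.le) hδpos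
      rw [hy0] at h2
      have := hsmin δ ⟨hδpos.le, hδL⟩
      linarith
    have hs0 : 0 < sstar := by
      rcases (hsI.1).lt_or_eq with h1 | h1
      · exact h1
      · exfalso; rw [hmdef, ← h1, hy0] at hm_neg; exact lt_irrefl 0 hm_neg
    have hsL : sstar < L := by
      rcases (hsI.2).lt_or_eq with h1 | h1
      · exact h1
      · exfalso; rw [hmdef, h1, hyL] at hm_neg; exact lt_irrefl 0 hm_neg
    -- at the interior minimum, sin (α sstar) = 0 and cos (α sstar) = -1
    have hsin_star : Real.sin (α sstar) = 0 := by
      have hmin : IsLocalMin y sstar := hsmin'.isLocalMin (Icc_mem_nhds hs0 hsL)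
      have hD : HasDerivAt y (Real.sin (α sstar)) sstar :=
        (hy sstar hsI).hasDerivAt (Icc_mem_nhds hs0 hsL)
      exact hmin.hasDerivAt_eq_zero hD
    have hcos_star : Real.cos (α sstar) = -1 := by
      have e1 := Real.sin_sq_add_cos_sq (α sstar)
      have e2 := hcoslt sstar hsI
      have : (Real.cos (α sstar) - 1) * (Real.cos (α sstar) + 1) = 0 := by nlinarith
      rcases mul_eq_zero.mp this with h1 | h1
      · exfalso; nlinarith
      · linarith
    set p : ℝ := α sstar with hpdef
    -- sign of sin (α s) on each side of sstar
    have hsinneg : ∀ s ∈ Icc (0:ℝ) L, s < sstar → Real.sin (α s) < 0 := by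
      intro s hs hlt
      have h1 : p < α s := hαanti hs hsI hlt
      have h2 : α s < p + π := by
        by_contra hcon
        push_neg at hcon
        have hsub : Icc s sstar ⊆ Icc (0:ℝ) L := Icc_subset_Icc hs.1 hsI.2
        have hmem : p + π ∈ Icc (α sstar) (α s) := ⟨by linarith [Real.pi_pos], hcon⟩
        obtain ⟨u, hu, hαu⟩ := intermediate_value_Icc' hlt.le (hαc.mono hsub) hmem
        have hcu := hcoslt u (hsub hu)
        rw [hαu, Real.cos_add_pi, hcos_star] at hcu
        linarith
      have hrw : Real.sin (α s) = - Real.sin (α s - p) := by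
        have e : α s = p + (α s - p) := by ring
        rw [e, Real.sin_add, hsin_star, hcos_star]; ring
      rw [hrw, neg_lt, neg_zero]
      exact Real.sin_pos_of_pos_of_lt_pi (by linarith) (by linarith)
    have hsinpos : ∀ s ∈ Icc (0:ℝ) L, sstar < s → 0 < Real.sin (α s) := by
      intro s hs hlt
      have h1 : α s < p := hαanti hsI hs hlt
      have h2 : p - π < α s := by
        by_contra hcon
        push_neg at hcon
        have hsub : Icc sstar s ⊆ Icc (0:ℝ) L := Icc_subset_Icc hsI.1 hs.2
        have hmem : p - π ∈ Icc (α s) (α sstar) := ⟨hcon, by linarith [Real.pi_pos]⟩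
        obtain ⟨u, hu, hαu⟩ := intermediate_value_Icc' hlt.le (hαc.mono hsub) hmem
        have hcu := hcoslt u (hsub hu)
        rw [hαu, Real.cos_sub_pi, hcos_star] at hcu
        linarith
      have hrw : Real.sin (α s) = Real.sin (p - α s) := by
        have e : α s = p - (p - α s) := by ring
        rw [e, Real.sin_sub, hsin_star, hcos_star]; ring
      rw [hrw]
      exact Real.sin_pos_of_pos_of_lt_pi (by linarith) (by linarith)
    -- y is strictly decreasing on [0, sstar] and strictly increasing on [sstar, L]
    have hyanti : StrictAntiOn y (Icc 0 sstar) := by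
      apply strictAntiOn_of_deriv_neg (convex_Icc 0 sstar)
        (hyc.mono (Icc_subset_Icc le_rfl hsI.2))
      intro s hs
      rw [interior_Icc] at hs
      have hsmem : s ∈ Icc (0:ℝ) L := ⟨hs.1.le, hs.2.le.trans hsI.2⟩
      have hD : HasDerivAt y (Real.sin (α s)) s :=
        (hy s hsmem).hasDerivAt (Icc_mem_nhds hs.1 (lt_of_lt_of_le hs.2 hsI.2))
      rw [hD.deriv]
      exact hsinneg s hsmem hs.2
    have hymono : StrictMonoOn y (Icc sstar L) := by
      apply strictMonoOn_of_deriv_pos (convex_Icc sstar L)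
        (hyc.mono (Icc_subset_Icc hsI.1 le_rfl))
      intro s hs
      rw [interior_Icc] at hs
      have hsmem : s ∈ Icc (0:ℝ) L := ⟨hsI.1.trans hs.1.le, hs.2.le⟩
      have hD : HasDerivAt y (Real.sin (α s)) s :=
        (hy s hsmem).hasDerivAt (Icc_mem_nhds (lt_of_le_of_lt hsI.1 hs.1) hs.2)
      rw [hD.deriv]
      exact hsinpos s hsmem hs.1
    -- x is strictly decreasing near sstar
    have hccont : ContinuousAt (fun s => Real.cos (α s)) sstar :=
      (Real.continuous_cos.comp_continuousOn hαc).continuousAt (Icc_mem_nhds hs0 hsL)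
    have hcstar_neg : Real.cos (α sstar) < 0 := by rw [hcos_star]; norm_num
    have hev : ∀ᶠ s in 𝓝 sstar, Real.cos (α s) < 0 :=
      Filter.Tendsto.eventually_lt_const hcstar_neg hccont
    obtain ⟨ε, hε, hball⟩ := Metric.eventually_nhds_iff.mp hev
    set δ : ℝ := min (ε / 2) (min sstar (L - sstar)) with hδdef
    have hδpos : 0 < δ := lt_min (by linarith) (lt_min hs0 (by linarith))
    have hδs : δ ≤ sstar := (min_le_right _ _).trans (min_le_left _ _)
    have hδLs : δ ≤ L - sstar := (min_le_right _ _).trans (min_le_right _ _)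
    have hδε : δ < ε := lt_of_le_of_lt (min_le_left _ _) (by linarith)
    have hsubI : Icc (sstar - δ) (sstar + δ) ⊆ Icc (0:ℝ) L :=
      Icc_subset_Icc (by linarith) (by linarith)
    have hxanti : StrictAntiOn x (Icc (sstar - δ) (sstar + δ)) := by
      apply strictAntiOn_of_deriv_neg (convex_Icc _ _) (hxc.mono hsubI)
      intro s hs
      rw [interior_Icc] at hs
      have hsmem : s ∈ Icc (0:ℝ) L := hsubI (Ioo_subset_Icc_self hs)
      have hD : HasDerivAt x (Real.cos (α s)) s :=
        (hx s hsmem).hasDerivAt (Icc_mem_nhds (by linarith [hs.1]) (by linarith [hs.2]))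
      rw [hD.deriv]
      apply hball
      rw [Real.dist_eq]
      have : |s - sstar| < δ := abs_lt.mpr ⟨by linarith [hs.1], by linarith [hs.2]⟩
      linarith
    -- choose t₁ ∈ (sstar, sstar + δ) with y t₁ < y (sstar - δ)
    have hsdm : sstar - δ ∈ Icc (0:ℝ) sstar := ⟨by linarith, by linarith⟩
    have hssm : sstar ∈ Icc (0:ℝ) sstar := right_mem_Icc.mpr (by linarith)
    have hym : m < y (sstar - δ) := hyanti hsdm hssm (by linarith)
    have hyct : ContinuousAt y sstar := hyc.continuousAt (Icc_mem_nhds hs0 hsL)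
    have hev2 : ∀ᶠ s in 𝓝 sstar, y s < y (sstar - δ) :=
      Filter.Tendsto.eventually_lt_const hym hyct
    obtain ⟨ε₂, hε₂, hb₂⟩ := Metric.eventually_nhds_iff.mp hev2
    set t₁ : ℝ := sstar + min (δ / 2) (ε₂ / 2) with ht₁def
    have hrpos : 0 < min (δ / 2) (ε₂ / 2) := lt_min (by linarith) (by linarith)
    have ht₁gt : sstar < t₁ := by simp only [ht₁def]; linarith
    have ht₁lt : t₁ < sstar + δ := by
      have := min_le_left (δ / 2) (ε₂ / 2); simp only [ht₁def]; linarith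
    have ht₁L : t₁ < L := by linarith
    have ht₁I : t₁ ∈ Icc (0:ℝ) L := ⟨by linarith, ht₁L.le⟩
    have hyt₁ : y t₁ < y (sstar - δ) := by
      apply hb₂
      rw [Real.dist_eq]
      have h1 : |t₁ - sstar| = min (δ / 2) (ε₂ / 2) := by
        simp only [ht₁def]; rw [add_sub_cancel_left, abs_of_pos hrpos]
      rw [h1]
      exact lt_of_le_of_lt (min_le_right _ _) (by linarith)
    -- the inverse of y on [0, sstar]
    have hm0 : m ≤ 0 := by have := hsmin 0 hI0; rw [hy0] at this; exact this
    have hyle0 : ∀ s ∈ Icc (0:ℝ) sstar, y s ≤ 0 := by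
      intro s hs
      have := hyanti.antitoneOn (left_mem_Icc.mpr hsI.1) hs hs.1
      rw [hy0] at this; exact this
    haveI : CompactSpace (Icc (0:ℝ) sstar) := isCompact_iff_compactSpace.mp isCompact_Icc
    set Y : Icc (0:ℝ) sstar → Icc m 0 :=
      fun s => ⟨y s, hsmin s ⟨s.2.1, s.2.2.trans hsI.2⟩, hyle0 s s.2⟩ with hYdef
    have hYc : Continuous Y := by
      apply Continuous.subtype_mk
      exact ContinuousOn.restrict (hyc.mono (Icc_subset_Icc le_rfl hsI.2))
    have hYbij : Function.Bijective Y := by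
      constructor
      · intro a b hab
        exact Subtype.ext (hyanti.injOn a.2 b.2 (congrArg Subtype.val hab))
      · intro v
        have hmem : (v : ℝ) ∈ Icc (y sstar) (y 0) := by rw [hy0]; exact v.2
        obtain ⟨s, hs, hys⟩ :=
          intermediate_value_Icc' hsI.1 (hyc.mono (Icc_subset_Icc le_rfl hsI.2)) hmem
        exact ⟨⟨s, hs⟩, Subtype.ext hys⟩
    set E : Icc (0:ℝ) sstar ≃ Icc m 0 := Equiv.ofBijective Y hYbij with hEdef
    have hEc : Continuous (E : Icc (0:ℝ) sstar → Icc m 0) := hYc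
    set homeo : Icc (0:ℝ) sstar ≃ₜ Icc m 0 := hEc.homeoOfEquivCompactToT2 with hhdef
    set σ : ℝ → ℝ := fun v => ((homeo.symm (projIcc m 0 hm0 v) : Icc (0:ℝ) sstar) : ℝ)
      with hσdef
    have hσcont : Continuous σ :=
      continuous_subtype_val.comp (homeo.symm.continuous.comp continuous_projIcc)
    have hσmem : ∀ v, σ v ∈ Icc (0:ℝ) sstar := fun v => (homeo.symm (projIcc m 0 hm0 v)).2
    have hσy : ∀ v ∈ Icc m 0, y (σ v) = v := by
      intro v hv
      have h1 : Y (homeo.symm (projIcc m 0 hm0 v)) = projIcc m 0 hm0 v :=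
        homeo.apply_symm_apply (projIcc m 0 hm0 v)
      have h2 := congrArg Subtype.val h1
      have h3 : σ v = ((homeo.symm (projIcc m 0 hm0 v)) : ℝ) := by rw [hσdef]
      have h4 : (Y (homeo.symm (projIcc m 0 hm0 v)) : ℝ)
          = y ((homeo.symm (projIcc m 0 hm0 v)) : ℝ) := by rw [hYdef]
      rw [h4] at h2
      rw [h3, h2, projIcc_of_mem hm0 hv]
    -- uniqueness of preimages under y on [0, sstar]
    have hσuniq : ∀ v ∈ Icc m 0, ∀ w ∈ Icc (0:ℝ) sstar, y w = v → w = σ v := by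
      intro v hv w hw hyw
      apply hyanti.injOn hw (hσmem v)
      rw [hyw, hσy v hv]
    -- the comparison function
    set F : ℝ → ℝ := fun t => x (σ (y t)) - x t with hFdef
    have hymem : ∀ t ∈ Icc t₁ L, y t ∈ Icc m 0 := by
      intro t ht
      have htI : t ∈ Icc (0:ℝ) L := ⟨by linarith [ht.1], ht.2⟩
      refine ⟨hsmin t htI, ?_⟩
      have := hymono.monotoneOn ⟨by linarith [ht.1], ht.2⟩
        (right_mem_Icc.mpr hsI.2) ht.2
      rw [hyL] at this; exact this
    have hFcont : ContinuousOn F (Icc t₁ L) := by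
      apply ContinuousOn.sub
      · apply hxc.comp ((hσcont.comp_continuousOn
          (hyc.mono (Icc_subset_Icc (by linarith) le_rfl))))
        intro t ht
        exact ⟨(hσmem (y t)).1, (hσmem (y t)).2.trans hsI.2⟩
      · exact hxc.mono (Icc_subset_Icc (by linarith) le_rfl)
    -- F t₁ > 0
    have hFt₁ : 0 < F t₁ := by
      have hyt₁mem : y t₁ ∈ Icc m 0 := hymem t₁ (left_mem_Icc.mpr ht₁L.le)
      set u₁ : ℝ := σ (y t₁) with hu₁def
      have hyu₁ : y u₁ = y t₁ := hσy (y t₁) hyt₁mem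
      have hu₁mem : u₁ ∈ Icc (0:ℝ) sstar := hσmem (y t₁)
      -- u₁ > sstar - δ
      have hu₁gt : sstar - δ < u₁ := by
        by_contra hcon
        push_neg at hcon
        have := hyanti.antitoneOn hu₁mem hsdm hcon
        rw [hyu₁] at this
        linarith
      -- u₁ < sstar
      have hu₁lt : u₁ < sstar := by
        rcases hu₁mem.2.lt_or_eq with h1 | h1
        · exact h1
        · exfalso
          have hyt₁m : m < y t₁ := by
            have h5 := hymono (left_mem_Icc.mpr hsI.2) ⟨by linarith, ht₁L.le⟩ ht₁gt
            rwa [← hmdef] at h5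
          rw [h1] at hyu₁
          rw [← hmdef] at hyu₁
          linarith
      have hx1 : x sstar < x u₁ :=
        hxanti ⟨hu₁gt.le, by linarith⟩ ⟨by linarith, by linarith⟩ hu₁lt
      have hx2 : x t₁ < x sstar :=
        hxanti ⟨by linarith, by linarith⟩ ⟨by linarith, ht₁lt.le⟩ ht₁gt
      simp only [hFdef, ← hu₁def]
      linarith
    -- F L < 0
    have hFL : F L < 0 := by
      have hσ0 : σ (0:ℝ) = 0 := by
        symm
        apply hσuniq 0 (right_mem_Icc.mpr hm0) 0 (left_mem_Icc.mpr hsI.1) hy0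
      simp only [hFdef, hyL, hσ0, hx0, hxL]
      linarith
    -- intermediate value: some t̂ ∈ [t₁, L] with F t̂ = 0
    obtain ⟨that, hthat, hFthat⟩ :=
      intermediate_value_Icc' ht₁L.le hFcont ⟨hFL.le, hFt₁.le⟩
    have hthatI : that ∈ Icc (0:ℝ) L := ⟨by linarith [hthat.1], hthat.2⟩
    set u : ℝ := σ (y that) with hudef
    have hyumem : y that ∈ Icc m 0 := hymem that hthat
    have hyu : y u = y that := hσy (y that) hyumem
    have humem : u ∈ Icc (0:ℝ) sstar := hσmem (y that)
    have huI : u ∈ Icc (0:ℝ) L := ⟨humem.1, humem.2.trans hsI.2⟩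
    have hxu : x u = x that := by
      have : x u - x that = 0 := hFthat
      linarith
    have hune : u ≠ that := by
      intro hcon
      have : u ≤ sstar := humem.2
      have : t₁ ≤ that := hthat.1
      linarith [ht₁gt, hcon ▸ humem.2]
    exact hune (hinj huI hthatI (by simp only [Prod.mk.injEq]; exact ⟨hxu, hyu⟩))
  · -- c = 0 : cos α ≡ k
    have hcos : ∀ s ∈ Icc (0:ℝ) L, Real.cos (α s) = k := by
      intro s hs
      have h1 := hF1 s hs
      rw [hc0] at h1
      have := htaut s hs
      rcases mul_eq_zero.mp h1 with h2 | h2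
      · linarith
      · linarith
    have hconst : ∀ s ∈ Icc (0:ℝ) L, x s - k * s = x 0 - k * 0 := by
      apply constOn (f' := fun s => Real.cos (α s) - k)
      · intro s hs
        have h := (hx s hs).sub ((hasDerivWithinAt_id s (Icc 0 L)).const_mul k)
        rw [mul_one] at h; exact h
      · intro s hs; rw [hcos s hs]; ring
    have h1 := hconst L hIL
    rw [hxL, hx0] at h1
    have : x₀ = k * L := by linarith
    linarith
  · -- c > 0 : cos α > k everywhere; x grows too fast
    have hcosgt : ∀ s ∈ Icc (0:ℝ) L, k < Real.cos (α s) := by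
      intro s hs
      have h1 := hF1 s hs
      nlinarith [htaut s hs]
    have hmono : StrictMonoOn (fun s => x s - k * s) (Icc 0 L) := by
      have hc2 : ContinuousOn (fun s => x s - k * s) (Icc 0 L) :=
        hxc.sub (by fun_prop)
      apply strictMonoOn_of_deriv_pos (convex_Icc 0 L) hc2
      intro s hs
      rw [interior_Icc] at hs
      have hD : HasDerivAt (fun u => x u - k * u) (Real.cos (α s) - k) s := by
        have h1 : HasDerivAt x (Real.cos (α s)) s :=
          (hx s (Ioo_subset_Icc_self hs)).hasDerivAt (Icc_mem_nhds hs.1 hs.2)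
        have h := h1.sub ((hasDerivAt_id s).const_mul k)
        rw [mul_one] at h; exact h
      rw [hD.deriv]
      have := hcosgt s (Ioo_subset_Icc_self hs)
      linarith
    have h1 := hmono hI0 hIL hL
    simp only [hx0, hxL] at h1
    linarith
end

section
/- Catenary shape under Newtonian wind load: let w > 0 and let α, T : [0,L] → ℝ be differentiable with T(s)·α'(s) = w·cos²(α(s)), T'(s) = 0, T(s) > 0 and cos(α(s)) > 0 for all s ∈ [0,L]. Then T is constant, equal to T₀ = T(0), and tan(α(s)) = tan(α(0)) + (w/T₀)·s for all s ∈ [0,L]; that is, the slope tan(α) is an affine function of arc length, so the string under vertical Newtonian wind takes the same shape in the plane as the catenary under gravity. -/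
open Real Set

/-- Catenary shape under Newtonian wind load: with
`T s * α' s = w * cos (α s) ^ 2`, `T' s = 0`, `T > 0` and `cos (α s) > 0` on `[0,L]`,
the tension `T` is constant, equal to `T₀ = T 0`, and
`tan (α s) = tan (α 0) + (w / T₀) * s`: the slope is an affine function of arc length,
so the string under vertical Newtonian wind takes the same planar shape as the
catenary under gravity. -/
theorem wind_load_catenary_shape
    (w L : ℝ) (hw : 0 < w) (α α' T : ℝ → ℝ)
    (hα : ∀ s ∈ Icc (0 : ℝ) L, HasDerivWithinAt α (α' s) (Icc (0 : ℝ) L) s)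
    (hT : ∀ s ∈ Icc (0 : ℝ) L, HasDerivWithinAt T 0 (Icc (0 : ℝ) L) s)
    (hode : ∀ s ∈ Icc (0 : ℝ) L, T s * α' s = w * Real.cos (α s) ^ 2)
    (hTpos : ∀ s ∈ Icc (0 : ℝ) L, 0 < T s)
    (hcos : ∀ s ∈ Icc (0 : ℝ) L, 0 < Real.cos (α s)) :
    (∀ s ∈ Icc (0 : ℝ) L, T s = T 0) ∧
      ∀ s ∈ Icc (0 : ℝ) L,
        Real.tan (α s) = Real.tan (α 0) + (w / T 0) * s := by
  have hconv : Convex ℝ (Icc (0 : ℝ) L) := convex_Icc 0 L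
  have hTconst : ∀ s ∈ Icc (0 : ℝ) L, T s = T 0 := by
    intro s hs
    have h0 : (0 : ℝ) ∈ Icc (0 : ℝ) L := ⟨le_refl 0, hs.1.trans hs.2⟩
    have := Convex.norm_image_sub_le_of_norm_hasDerivWithin_le (f' := fun _ => (0:ℝ))
      (C := 0) hT (fun x hx => by simp) hconv h0 hs
    have : ‖T s - T 0‖ ≤ 0 := by simpa using this
    have := norm_nonneg (T s - T 0)
    have : ‖T s - T 0‖ = 0 := le_antisymm ‹‖T s - T 0‖ ≤ 0› this
    have := norm_eq_zero.mp this
    linarith [sub_eq_zero.mp this]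
  refine ⟨hTconst, ?_⟩
  set f : ℝ → ℝ := fun s => Real.tan (α s) - (w / T 0) * s with hf
  have hfderiv : ∀ s ∈ Icc (0 : ℝ) L, HasDerivWithinAt f 0 (Icc (0 : ℝ) L) s := by
    intro s hs
    have hc : Real.cos (α s) ≠ 0 := (hcos s hs).ne'
    have htan : HasDerivWithinAt (fun x => Real.tan (α x))
        (1 / Real.cos (α s) ^ 2 * α' s) (Icc (0 : ℝ) L) s :=
      (Real.hasDerivAt_tan hc).comp_hasDerivWithinAt s (hα s hs)
    have hlin : HasDerivWithinAt (fun x => (w / T 0) * x) (w / T 0) (Icc (0 : ℝ) L) s :=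
      by simpa using ((hasDerivAt_id s).const_mul (w / T 0)).hasDerivWithinAt
    have hT0 : T s = T 0 := hTconst s hs
    have hTne : T 0 ≠ 0 := by have := hTpos s hs; rw [hT0] at this; exact this.ne'
    have hα' : α' s = w * Real.cos (α s) ^ 2 / T 0 := by
      have := hode s hs
      rw [hT0] at this
      field_simp at this ⊢
      linarith
    have hz : 1 / Real.cos (α s) ^ 2 * α' s - w / T 0 = 0 := by
      rw [hα']
      field_simp
      ring
    have h2 := htan.sub hlin
    rw [hz] at h2
    exact h2
  intro s hs
  have h0 : (0 : ℝ) ∈ Icc (0 : ℝ) L := ⟨le_refl 0, hs.1.trans hs.2⟩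
  have := Convex.norm_image_sub_le_of_norm_hasDerivWithin_le (f' := fun _ => (0:ℝ))
    (C := 0) hfderiv (fun x hx => by simp) hconv h0 hs
  have hfeq : f s = f 0 := by
    have h1 : ‖f s - f 0‖ ≤ 0 := by simpa using this
    have h2 := norm_nonneg (f s - f 0)
    have : f s - f 0 = 0 := norm_eq_zero.mp (le_antisymm h1 h2)
    linarith [sub_eq_zero.mp this]
  have heq : Real.tan (α s) - (w / T 0) * s = Real.tan (α 0) - (w / T 0) * 0 := hfeq
  linarith [heq]
end
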